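/- arXiv:2207.06264 — 4 statements merged into one kernel-verified Lean document; each statement's English description precedes it below -/
import Mathlib

section
/- Let p be a prime, and let k ≥ 1, j ≥ 0, N ≥ 1, M ≥ 1, and r be integers with 1 ≤ r ≤ p^M − 1. If d_k(p^M·n + r) ≡ 0 (mod p^N) for all integers n ≥ 0, then d_{p^{M+N−1}·j + k}(p^M·n + r) ≡ 0 (mod p^N) for all integers n ≥ 0. -/
/-!
With `A = ∏ (1 - q^m)` and `B = ∏ (1 - q^{2m})`, the generating function of `d_k` is
`F_k = B^k / A^{3k+1}`, so `F_{K+k} = F_k · G^K` with `G = B / A^3`. For `K = p^{M+N-1} j`,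
the Frobenius congruence `f(q)^p ≡ f(q^p) (mod p)`, lifted through `a ≡ b (mod p^s) ⇒
a^p ≡ b^p (mod p^{s+1})`, gives `G^K ≡ H(q^{p^M}) (mod p^N)` for some power series `H`.
The coefficient of `q^{p^M n + r}` in `F_k · H(q^{p^M})` is an integer combination of the
values `d_k(p^M n' + r)`, all divisible by `p^N`. Since the products are infinite, everything
is done modulo `q^{T+1}` with the products truncated at `T`.
-/

/-- `ElongatedDiamondGF d` says that for every `k ≥ 1`, the sequence `d k` satisfies the
formal power series identity `∑_{n≥0} d_k(n) q^n = ∏_{m≥1} (1 − q^{2m})^k / ∏_{m≥1} (1 − q^m)^{3k+1}`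
in `ℤ[[q]]`, i.e. `(∑_{n≥0} d_k(n) q^n) · ∏_{m≥1} (1 − q^m)^{3k+1} = ∏_{m≥1} (1 − q^{2m})^k`.
Since the factors with `m > n` do not affect the coefficient of `q^n`, this infinite-product
identity is encoded coefficient-wise via the truncated (finite) products over `1 ≤ m ≤ n`.
Combinatorially, `d k n` counts the partitions obtained by adding the links of the
`k`-elongated plane partition diamonds of length `n`. -/
def ElongatedDiamondGF (d : ℕ → ℕ → ℤ) : Prop :=
  ∀ k : ℕ, 1 ≤ k → ∀ n : ℕ,
    (PowerSeries.coeff (R := ℤ) n)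
        ((PowerSeries.mk fun i => d k i) *
          ∏ m ∈ Finset.Icc 1 n, (1 - PowerSeries.X ^ m) ^ (3 * k + 1)) =
      (PowerSeries.coeff (R := ℤ) n) (∏ m ∈ Finset.Icc 1 n, (1 - PowerSeries.X ^ (2 * m)) ^ k)

open PowerSeries Finset

section Truncation

variable {R : Type*} [CommRing R]

theorem X_pow_dvd_sub_iff {n : ℕ} {f g : R⟦X⟧} :
    X ^ n ∣ f - g ↔ ∀ i < n, coeff i f = coeff i g := by
  simp only [X_pow_dvd_iff, map_sub, sub_eq_zero]

theorem X_pow_dvd_one_sub_X_pow_pow_sub_one {m n : ℕ} (hmn : m ≤ n) (e : ℕ) :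
    (X : R⟦X⟧) ^ m ∣ (1 - X ^ n) ^ e - 1 := by
  have h : (X : R⟦X⟧) ^ m ∣ (1 - X ^ n) - 1 := by
    rw [sub_sub_cancel_left]
    exact (pow_dvd_pow X hmn).neg_right
  simpa using h.trans (sub_dvd_pow_sub_pow _ 1 e)

theorem coeff_mul_prod_Icc_of_le {u : ℕ → R⟦X⟧} (hu : ∀ m, X ^ m ∣ u m - 1) (F : R⟦X⟧)
    {i T : ℕ} (hiT : i ≤ T) :
    coeff i (F * ∏ m ∈ Icc 1 T, u m) = coeff i (F * ∏ m ∈ Icc 1 i, u m) := by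
  induction T, hiT using Nat.le_induction with
  | base => rfl
  | succ T hiT ih =>
    rw [← ih, prod_Icc_succ_top (Nat.le_add_left 1 T), ← mul_assoc]
    refine X_pow_dvd_sub_iff.mp ?_ i (Nat.lt_succ_of_le hiT)
    rw [← mul_sub_one]
    exact (hu (T + 1)).mul_left _

end Truncation

section Congruences

theorem C_dvd_iff_forall_dvd_coeff {R : Type*} [CommRing R] {a : R} {f : R⟦X⟧} :
    C a ∣ f ↔ ∀ n, a ∣ coeff n f := by
  refine ⟨fun ⟨g, hg⟩ n => ⟨coeff n g, by rw [hg, coeff_C_mul]⟩, fun h => ?_⟩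
  choose g hg using h
  exact ⟨mk g, ext fun n => by rw [coeff_C_mul, coeff_mk, ← hg]⟩

variable {p : ℕ} (hp : p.Prime)
include hp

theorem natCast_dvd_pow_sub_expand (f : ℤ⟦X⟧) : (p : ℤ⟦X⟧) ∣ f ^ p - expand p hp.ne_zero f := by
  have := Fact.mk hp
  have hzero : map (Int.castRingHom (ZMod p)) (f ^ p - expand p hp.ne_zero f) = 0 := by
    rw [map_sub, map_pow, map_expand, ← MvPowerSeries.map_frobenius_expand p hp.ne_zero,
      ZMod.frobenius_zmod]
    exact sub_eq_zero.mpr (congrFun map_id _)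
  rw [← map_natCast C, C_dvd_iff_forall_dvd_coeff]
  intro n
  rw [← ZMod.intCast_zmod_eq_zero_iff_dvd, ← eq_intCast (Int.castRingHom (ZMod p)), ← coeff_map,
    hzero, map_zero]

theorem natCast_pow_dvd_pow_sub_expand_pow (M N : ℕ) (f : ℤ⟦X⟧) :
    (p : ℤ⟦X⟧) ^ (N + 1) ∣
      f ^ p ^ (M + N) - expand (p ^ M) (pow_ne_zero M hp.ne_zero) f ^ p ^ N := by
  induction M generalizing f with
  | zero => simp
  | succ M ih =>
    have hfrob : (p : ℤ⟦X⟧) ^ (N + 1) ∣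
        (f ^ p) ^ p ^ (M + N) - expand p hp.ne_zero f ^ p ^ (M + N) :=
      (pow_dvd_pow _ (by omega)).trans
        (dvd_sub_pow_of_dvd_sub (natCast_dvd_pow_sub_expand hp f) _)
    have hrec := ih (expand p hp.ne_zero f)
    simp only [← expand_mul, ← pow_succ] at hrec
    rw [show f ^ p ^ (M + 1 + N) = (f ^ p) ^ p ^ (M + N) by
      rw [← pow_mul, ← pow_succ', add_right_comm]]
    simpa only [sub_add_sub_cancel] using dvd_add hfrob hrec

end Congruences

theorem dvd_coeff_mul_expand {R : Type*} [CommRing R] {q r : ℕ} (hq : q ≠ 0) (hr : r < q)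
    {a : R} {F : R⟦X⟧} (hF : ∀ n, a ∣ coeff (q * n + r) F) (g : R⟦X⟧) (n : ℕ) :
    a ∣ coeff (q * n + r) (F * expand q hq g) := by
  rw [coeff_mul]
  refine dvd_sum fun x hx => ?_
  by_cases hdvd : q ∣ x.2
  · obtain ⟨c, hc⟩ := hdvd
    have hmod : x.1 % q = r := by
      rw [← Nat.add_mul_mod_self_left x.1 q c, ← hc, mem_antidiagonal.mp hx,
        Nat.mul_add_mod, Nat.mod_eq_of_lt hr]
    have := hF (x.1 / q)
    rw [← hmod, Nat.div_add_mod] at this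
    exact this.mul_right _
  · rw [coeff_expand_of_not_dvd q hq g hdvd, mul_zero]
    exact dvd_zero a

theorem dvd_coeff_mul_pow_of_dvd_coeff {p : ℕ} (hp : p.Prime) {M N r : ℕ} (hr : r < p ^ M)
    {F : ℤ⟦X⟧} (hF : ∀ n, (p : ℤ) ^ (N + 1) ∣ coeff (p ^ M * n + r) F) (G : ℤ⟦X⟧) (j n : ℕ) :
    (p : ℤ) ^ (N + 1) ∣ coeff (p ^ M * n + r) (F * G ^ (p ^ (M + N) * j)) := by
  have hGH : (p : ℤ⟦X⟧) ^ (N + 1) ∣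
      G ^ (p ^ (M + N) * j) - expand (p ^ M) (pow_ne_zero M hp.ne_zero) (G ^ (p ^ N * j)) := by
    rw [pow_mul G, pow_mul G, map_pow, map_pow]
    exact (natCast_pow_dvd_pow_sub_expand_pow hp M N G).trans (sub_dvd_pow_sub_pow _ _ j)
  rw [← sub_add_cancel (G ^ (p ^ (M + N) * j))
    (expand (p ^ M) (pow_ne_zero M hp.ne_zero) (G ^ (p ^ N * j))), mul_add, map_add]
  refine dvd_add ?_ (dvd_coeff_mul_expand _ hr hF _ n)
  have hGH' := hGH.mul_left F
  rw [← map_natCast C, ← map_pow] at hGH'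
  exact C_dvd_iff_forall_dvd_coeff.mp hGH' _

noncomputable def eulerProd (c T : ℕ) : ℤ⟦X⟧ := ∏ m ∈ Icc 1 T, (1 - X ^ (c * m))

theorem constantCoeff_eulerProd {c : ℕ} (hc : 0 < c) (T : ℕ) :
    constantCoeff (eulerProd c T) = 1 := by
  refine (map_prod _ _ _).trans (prod_eq_one fun m hm => ?_)
  have : c * m ≠ 0 := by have := (mem_Icc.mp hm).1; positivity
  simp [this]

namespace ElongatedDiamondGF

variable {d : ℕ → ℕ → ℤ} (hd : ElongatedDiamondGF d)
include hd

theorem X_pow_dvd_mk_mul_sub {κ : ℕ} (hκ : 1 ≤ κ) (T : ℕ) :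
    X ^ (T + 1) ∣ PowerSeries.mk (d κ) * eulerProd 1 T ^ (3 * κ + 1) - eulerProd 2 T ^ κ := by
  refine X_pow_dvd_sub_iff.mpr fun i hi => ?_
  have hiT : i ≤ T := Nat.le_of_lt_succ hi
  simp only [eulerProd, one_mul, ← prod_pow]
  rw [coeff_mul_prod_Icc_of_le (fun m => X_pow_dvd_one_sub_X_pow_pow_sub_one le_rfl _) _ hiT,
    ← one_mul (∏ m ∈ Icc 1 T, _),
    coeff_mul_prod_Icc_of_le (fun m => X_pow_dvd_one_sub_X_pow_pow_sub_one (by omega) _) _ hiT,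
    one_mul]
  exact hd κ hκ i

theorem X_pow_dvd_mk_sub_mul_pow {k : ℕ} (hk : 1 ≤ k) (K T : ℕ) :
    X ^ (T + 1) ∣ PowerSeries.mk (d (K + k)) -
      PowerSeries.mk (d k) * (eulerProd 2 T * (eulerProd 1 T).invOfUnit 1 ^ 3) ^ K := by
  set V := (eulerProd 1 T).invOfUnit 1
  have hV : eulerProd 1 T * V = 1 :=
    mul_invOfUnit _ _ (by rw [constantCoeff_eulerProd one_pos, Units.val_one])
  have hclosed : ∀ κ, 1 ≤ κ →
      X ^ (T + 1) ∣ PowerSeries.mk (d κ) - eulerProd 2 T ^ κ * V ^ (3 * κ + 1) := fun κ hκ => by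
    have := (hd.X_pow_dvd_mk_mul_sub hκ T).mul_right (V ^ (3 * κ + 1))
    rwa [sub_mul, mul_assoc, ← mul_pow, hV, one_pow, mul_one] at this
  have hsplit : PowerSeries.mk (d (K + k)) - PowerSeries.mk (d k) * (eulerProd 2 T * V ^ 3) ^ K =
      (PowerSeries.mk (d (K + k)) - eulerProd 2 T ^ (K + k) * V ^ (3 * (K + k) + 1)) -
        (eulerProd 2 T * V ^ 3) ^ K *
          (PowerSeries.mk (d k) - eulerProd 2 T ^ k * V ^ (3 * k + 1)) := by
    ring
  rw [hsplit]
  exact dvd_sub (hclosed _ (by omega)) ((hclosed k hk).mul_left _)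

end ElongatedDiamondGF

theorem stmt_3_general (d : ℕ → ℕ → ℤ) (hd : ElongatedDiamondGF d)
    (p k j N M r : ℕ) (hp : p.Prime) (hk : 1 ≤ k)
    (hr2 : r ≤ p ^ M - 1)
    (h : ∀ n : ℕ, (p : ℤ) ^ N ∣ d k (p ^ M * n + r)) :
    ∀ n : ℕ, (p : ℤ) ^ N ∣ d (p ^ (M + N - 1) * j + k) (p ^ M * n + r) := by
  obtain _ | N := N
  · simp
  intro n
  have hr : r < p ^ M := by have := pow_pos hp.pos M; omega
  have hcoeff := X_pow_dvd_sub_iff.mp (hd.X_pow_dvd_mk_sub_mul_pow hk (p ^ (M + N) * j)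
    (p ^ M * n + r)) _ (lt_add_one _)
  rw [← add_assoc, Nat.add_sub_cancel, ← coeff_mk (p ^ M * n + r) (d _), hcoeff]
  exact dvd_coeff_mul_pow_of_dvd_coeff hp hr (by simpa using h) _ j n

theorem stmt_3 (d : ℕ → ℕ → ℤ) (hd : ElongatedDiamondGF d)
    (p k j N M r : ℕ) (hp : p.Prime) (hk : 1 ≤ k) (hN : 1 ≤ N) (hM : 1 ≤ M)
    (hr1 : 1 ≤ r) (hr2 : r ≤ p ^ M - 1)
    (h : ∀ n : ℕ, (p : ℤ) ^ N ∣ d k (p ^ M * n + r)) :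
    ∀ n : ℕ, (p : ℤ) ^ N ∣ d (p ^ (M + N - 1) * j + k) (p ^ M * n + r) :=
  stmt_3_general d hd p k j N M r hp hk hr2 h
end

section
/- For all integers n ≥ 0 and j ≥ 0, d_{4j+3}(4n + 2) ≡ 0 (mod 2). -/
open PowerSeries Finset

namespace ElongatedDiamond

variable {R : Type*} [CommRing R]

instance charP_powerSeries (p : ℕ) [CharP R p] : CharP R⟦X⟧ p :=
  charP_of_injective_algebraMap C_injective p

lemma one_sub_pow_char_pow_mul {p : ℕ} [Fact p.Prime] [CharP R p] (x : R) (n e : ℕ) :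
    (1 - x) ^ (p ^ n * e) = (1 - x ^ p ^ n) ^ e := by
  rw [pow_mul, sub_pow_char_pow, one_pow]

lemma dvd_prod_sub_one {ι : Type*} {a : R} {s : Finset ι} {f : ι → R}
    (h : ∀ i ∈ s, a ∣ f i - 1) : a ∣ ∏ i ∈ s, f i - 1 := by
  refine prod_induction f (fun b => a ∣ b - 1) (fun b c hb hc => ?_) (by simp) h
  rw [show b * c - 1 = b * (c - 1) + (b - 1) by ring]
  exact dvd_add (dvd_mul_of_dvd_right hc b) hb

lemma X_pow_dvd_one_sub_X_pow_pow_sub_one (m e : ℕ) :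
    (X : R⟦X⟧) ^ m ∣ (1 - X ^ m) ^ e - 1 := by
  have h := sub_dvd_pow_sub_pow (1 - X ^ m : R⟦X⟧) 1 e
  rwa [sub_sub_cancel_left, neg_dvd, one_pow] at h

lemma isUnit_prod_Icc_one_sub_X_pow_pow (N e : ℕ) :
    IsUnit (∏ m ∈ Icc 1 N, (1 - X ^ m : R⟦X⟧) ^ e) := by
  refine isUnit_iff_constantCoeff.2 ?_
  rw [map_prod, prod_eq_one fun m hm => ?_]
  · exact isUnit_one
  · simp [zero_pow (by grind : m ≠ 0)]

lemma X_pow_succ_dvd_prod_Icc_sub_prod_Icc {f : ℕ → R⟦X⟧} (hf : ∀ m, X ^ m ∣ f m - 1)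
    {i N : ℕ} (hiN : i ≤ N) :
    X ^ (i + 1) ∣ ∏ m ∈ Icc 1 N, f m - ∏ m ∈ Icc 1 i, f m := by
  have hsplit : ∏ m ∈ Icc 1 N, f m = (∏ m ∈ Icc 1 i, f m) * ∏ m ∈ Ioc i N, f m :=
    (prod_Ioc_consecutive f (Nat.zero_le i) hiN).symm
  have htail : X ^ (i + 1) ∣ ∏ m ∈ Ioc i N, f m - 1 :=
    dvd_prod_sub_one fun m hm => (pow_dvd_pow X (mem_Ioc.1 hm).1).trans (hf m)
  rw [hsplit, ← mul_sub_one]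
  exact dvd_mul_of_dvd_right htail _

lemma coeff_mul_prod_Icc_of_le {f : ℕ → R⟦X⟧} (hf : ∀ m, X ^ m ∣ f m - 1) (A : R⟦X⟧)
    {i N : ℕ} (hiN : i ≤ N) :
    coeff i (A * ∏ m ∈ Icc 1 N, f m) = coeff i (A * ∏ m ∈ Icc 1 i, f m) := by
  have h := X_pow_dvd_iff.1
    (dvd_mul_of_dvd_right (X_pow_succ_dvd_prod_Icc_sub_prod_Icc hf hiN) A) i i.lt_succ_self
  rwa [mul_sub, map_sub, sub_eq_zero] at h

lemma coeff_eq_zero_of_X_pow_dvd_mul_expand_sub_one {c : ℕ} (hc : c ≠ 0) {F G : R⟦X⟧}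
    (hG : IsUnit G) {N : ℕ} (h : X ^ (N + 1) ∣ F * expand c hc G - 1) (hN : ¬ c ∣ N) :
    coeff N F = 0 := by
  obtain ⟨u, rfl⟩ := hG
  set v : R⟦X⟧ := ↑u⁻¹
  have hinv : expand c hc v * expand c hc u = 1 := by
    rw [← map_mul, Units.inv_mul, map_one]
  have hF : F - expand c hc v = expand c hc v * (F * expand c hc u - 1) := by
    linear_combination (-F) * hinv
  have hcoeff := X_pow_dvd_iff.1 (hF ▸ dvd_mul_of_dvd_right h _) N N.lt_succ_self
  rwa [map_sub, coeff_expand_of_not_dvd c hc _ hN, sub_zero] at hcoeff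

lemma X_pow_succ_dvd_of_elongatedDiamondGF {d : ℕ → ℕ → ℤ} (hd : ElongatedDiamondGF d)
    {k : ℕ} (hk : 1 ≤ k) (N : ℕ) :
    X ^ (N + 1) ∣ PowerSeries.mk (fun i => d k i) * ∏ m ∈ Icc 1 N, (1 - X ^ m) ^ (3 * k + 1) -
      ∏ m ∈ Icc 1 N, (1 - X ^ (2 * m)) ^ k := by
  have hf : ∀ m, (X : ℤ⟦X⟧) ^ m ∣ (1 - X ^ m) ^ (3 * k + 1) - 1 := fun m =>
    X_pow_dvd_one_sub_X_pow_pow_sub_one m _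
  have hg : ∀ m, (X : ℤ⟦X⟧) ^ m ∣ (1 - X ^ (2 * m)) ^ k - 1 := fun m =>
    (pow_dvd_pow X (by omega)).trans (X_pow_dvd_one_sub_X_pow_pow_sub_one (2 * m) k)
  refine X_pow_dvd_iff.2 fun i hi => ?_
  rw [map_sub, sub_eq_zero, coeff_mul_prod_Icc_of_le hf _ (by omega), hd k hk i,
    ← one_mul (∏ m ∈ Icc 1 N, _), coeff_mul_prod_Icc_of_le hg 1 (by omega), one_mul]

lemma X_pow_succ_dvd_map_mul_expand_sub_one {d : ℕ → ℕ → ℤ} (hd : ElongatedDiamondGF d)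
    (j N : ℕ) :
    X ^ (N + 1) ∣ map (Int.castRingHom (ZMod 2)) (PowerSeries.mk fun i => d (4 * j + 3) i) *
      expand 4 four_ne_zero (∏ m ∈ Icc 1 N, (1 - X ^ m) ^ (j + 1)) - 1 := by
  set k := 4 * j + 3
  set F := map (Int.castRingHom (ZMod 2)) (PowerSeries.mk fun i => d k i)
  set E : ℕ → (ZMod 2)⟦X⟧ := fun e => ∏ m ∈ Icc 1 N, (1 - X ^ m) ^ e
  have h := map_dvd (map (Int.castRingHom (ZMod 2)))
    (X_pow_succ_dvd_of_elongatedDiamondGF hd (k := k) (by omega) N)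
  simp only [map_sub, map_mul, map_prod, map_pow, map_one, map_X] at h
  have hsq : ∏ m ∈ Icc 1 N, (1 - X ^ (2 * m) : (ZMod 2)⟦X⟧) ^ k = E (2 * k) :=
    prod_congr rfl fun m _ => by
      rw [pow_mul' X 2 m, show 2 * k = 2 ^ 1 * k by ring, one_sub_pow_char_pow_mul, pow_one]
  have hsplit : E (3 * k + 1) = E (2 * k) * E (k + 1) := by
    rw [← prod_mul_distrib]
    exact prod_congr rfl fun m _ => by ring
  have hexpand : E (k + 1) = expand 4 four_ne_zero (E (j + 1)) := by
    simp only [E, map_prod, map_pow, map_sub, map_one, expand_X, ← pow_mul]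
    exact prod_congr rfl fun m _ => by
      rw [show k + 1 = 2 ^ 2 * (j + 1) by omega, one_sub_pow_char_pow_mul]
      ring
  rw [hsq] at h
  change X ^ (N + 1) ∣ F * E (3 * k + 1) - E (2 * k) at h
  rwa [hsplit, show F * (E (2 * k) * E (k + 1)) - E (2 * k) = E (2 * k) * (F * E (k + 1) - 1)
    by ring, (isUnit_prod_Icc_one_sub_X_pow_pow N (2 * k)).dvd_mul_left, hexpand] at h

end ElongatedDiamond

open ElongatedDiamond

theorem stmt_4 (d : ℕ → ℕ → ℤ) (hd : ElongatedDiamondGF d) :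
    ∀ n j : ℕ, (2 : ℤ) ∣ d (4 * j + 3) (4 * n + 2) := by
  intro n j
  have h := coeff_eq_zero_of_X_pow_dvd_mul_expand_sub_one four_ne_zero
    (isUnit_prod_Icc_one_sub_X_pow_pow _ _) (X_pow_succ_dvd_map_mul_expand_sub_one hd j _)
    (by omega : ¬ 4 ∣ 4 * n + 2)
  rw [coeff_map, coeff_mk] at h
  exact_mod_cast (ZMod.intCast_zmod_eq_zero_iff_dvd _ 2).1 h
end

section
/- For all integers n ≥ 0 and j ≥ 0, d_{8j+7}(8n + 7) ≡ 0 (mod 16). -/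
open Finset


section GB
variable {R : Type*} [CommRing R]

/-- Gaussian binomial as ring element, by the Pascal recursion `B(n+1,k+1)=B(n,k)+t^(k+1) B(n,k+1)`. -/
def gb (t : R) : ℕ → ℕ → R
  | _, 0 => 1
  | 0, _ + 1 => 0
  | n + 1, k + 1 => gb t n k + t ^ (k + 1) * gb t n (k + 1)

@[simp] lemma gb_zero_right (t : R) (n : ℕ) : gb t n 0 = 1 := by cases n <;> rfl

@[simp] lemma gb_zero_succ (t : R) (k : ℕ) : gb t 0 (k+1) = 0 := rfl

lemma gb_succ_succ (t : R) (n k : ℕ) :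
    gb t (n+1) (k+1) = gb t n k + t ^ (k+1) * gb t n (k+1) := rfl

lemma gb_eq_zero (t : R) : ∀ {n k : ℕ}, n < k → gb t n k = 0
  | 0, _ + 1, _ => rfl
  | n + 1, k + 1, h => by
      rw [gb_succ_succ, gb_eq_zero t (by omega), gb_eq_zero t (by omega), mul_zero, add_zero]

@[simp] lemma gb_self (t : R) : ∀ n : ℕ, gb t n n = 1
  | 0 => rfl
  | n + 1 => by
      rw [gb_succ_succ, gb_self t n, gb_eq_zero t (by omega), mul_zero, add_zero]

/-- auxiliary: second Pascal rule at k = 0. -/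
lemma gb_one_step (t : R) : ∀ n : ℕ, gb t (n+2) 1 = t ^ (n+1) + gb t (n+1) 1
  | 0 => by
      rw [show (0:ℕ)+2 = 1+1 from rfl, gb_succ_succ t 1 0, gb_succ_succ t 0 0]
      simp
      ring
  | n + 1 => by
      have d1 : gb t (n+3) 1 = 1 + t * gb t (n+2) 1 := by
        rw [show n+3 = (n+2)+1 from rfl, gb_succ_succ t (n+2) 0, gb_zero_right, pow_one]
      have d2 : gb t (n+2) 1 = 1 + t * gb t (n+1) 1 := by
        rw [show n+2 = (n+1)+1 from rfl, gb_succ_succ t (n+1) 0, gb_zero_right, pow_one]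
      have IH := gb_one_step t n
      show gb t (n+3) 1 = t^(n+2) + gb t (n+2) 1
      linear_combination d1 + t * IH - d2

/-- Second Pascal rule: `B(n+1,k+1) = t^(n-k) B(n,k) + B(n,k+1)` for `k ≤ n`. -/
lemma gb_pascal' (t : R) : ∀ n : ℕ, ∀ k : ℕ, k ≤ n →
    gb t (n+1) (k+1) = t ^ (n - k) * gb t n k + gb t n (k+1)
  | 0, 0, _ => by
      rw [gb_succ_succ]
      simp
  | n + 1, 0, _ => by
      have h := gb_one_step t n
      rw [h]
      simp
  | n + 1, k + 1, h => by
      rcases eq_or_lt_of_le h with heq | hlt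
      · have hkn : k = n := by omega
        subst hkn
        have z1 : gb t (k+1) (k+1+1) = 0 := gb_eq_zero t (by omega)
        rw [gb_self, gb_self, z1]
        simp
      · have hk : k ≤ n := by omega
        have hk1 : k + 1 ≤ n := by omega
        obtain ⟨a, rfl⟩ : ∃ a, n = k+1+a := ⟨n-(k+1), by omega⟩
        have L : gb t (k+1+a+2) (k+2) = gb t (k+1+a+1) (k+1) + t^(k+2) * gb t (k+1+a+1) (k+2) := by
          rw [show k+1+a+2 = (k+1+a+1)+1 from rfl, gb_succ_succ]
        have I1 : gb t (k+1+a+1) (k+1) = t^(a+1) * gb t (k+1+a) k + gb t (k+1+a) (k+1) := by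
          have := gb_pascal' t (k+1+a) k (by omega)
          rwa [show k+1+a-k = a+1 by omega] at this
        have I2 : gb t (k+1+a+1) (k+2) = t^a * gb t (k+1+a) (k+1) + gb t (k+1+a) (k+2) := by
          have := gb_pascal' t (k+1+a) (k+1) (by omega)
          rwa [show k+1+a-(k+1) = a by omega] at this
        have D1 : gb t (k+1+a+1) (k+1) = gb t (k+1+a) k + t^(k+1) * gb t (k+1+a) (k+1) := by
          rw [show k+1+a+1 = (k+1+a)+1 from rfl, gb_succ_succ]
        have D2 : gb t (k+1+a+1) (k+2) = gb t (k+1+a) (k+1) + t^(k+2) * gb t (k+1+a) (k+2) := by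
          rw [show k+1+a+1 = (k+1+a)+1 from rfl, gb_succ_succ]
        rw [show k+1+a+1-(k+1) = a+1 by omega]
        linear_combination L + I1 + t^(k+2) * I2 - t^(a+1) * D1 - D2

/-- ℤ-indexed Gaussian binomial, zero outside `0 ≤ k ≤ n`. -/
noncomputable def gbz (t : R) (n : ℕ) (k : ℤ) : R :=
  if 0 ≤ k ∧ k ≤ n then gb t n k.toNat else 0

lemma gbz_neg (t : R) (n : ℕ) {k : ℤ} (h : k < 0) : gbz t n k = 0 := by
  rw [gbz, if_neg]; omega

lemma gbz_big (t : R) (n : ℕ) {k : ℤ} (h : (n : ℤ) < k) : gbz t n k = 0 := by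
  rw [gbz, if_neg]; omega

lemma gbz_ofNat (t : R) (n k : ℕ) (h : k ≤ n) : gbz t n (k : ℤ) = gb t n k := by
  rw [gbz, if_pos (by constructor <;> omega)]
  simp

@[simp] lemma gbz_zero_right (t : R) (n : ℕ) : gbz t n 0 = 1 := by
  rw [show (0:ℤ) = ((0:ℕ):ℤ) by norm_num, gbz_ofNat t n 0 (Nat.zero_le _)]; simp

/-- First Pascal rule, ℤ-indexed, valid for all k. -/
lemma gbz_pascal (t : R) (n : ℕ) (k : ℤ) :
    gbz t (n+1) k = gbz t n (k-1) + t ^ k.toNat * gbz t n k := by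
  rcases lt_trichotomy k 0 with h | rfl | h
  · rw [gbz_neg t _ h, gbz_neg t _ (by omega), gbz_neg t _ h, mul_zero, add_zero]
  · rw [gbz_zero_right, gbz_zero_right, gbz_neg t _ (by omega)]
    simp
  · rcases le_or_gt k n with h2 | h2
    · obtain ⟨m, rfl⟩ : ∃ m : ℕ, k = ((m+1:ℕ):ℤ) := ⟨(k-1).toNat, by push_cast; omega⟩
      have hmn : m + 1 ≤ n := by push_cast at h2; omega
      rw [gbz_ofNat t (n+1) (m+1) (by omega),
        show ((m+1:ℕ):ℤ) - 1 = ((m:ℕ):ℤ) by push_cast; ring,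
        gbz_ofNat t n m (by omega),
        show (((m+1:ℕ):ℤ)).toNat = m+1 by omega,
        gbz_ofNat t n (m+1) hmn, gb_succ_succ]
    · rcases eq_or_lt_of_le (by omega : (n:ℤ)+1 ≤ k) with h3 | h3
      · have hk : k = ((n+1:ℕ):ℤ) := by push_cast; omega
        subst hk
        have hbig : gbz t n ((n:ℤ)+1) = 0 := gbz_big t n (by omega)
        have hbig2 : gbz t n (((n+1:ℕ)):ℤ) = 0 := gbz_big t n (by push_cast; omega)
        rw [gbz_ofNat t (n+1) (n+1) le_rfl, gb_self,
          show ((n+1:ℕ):ℤ)-1 = ((n:ℕ):ℤ) by push_cast; ring, gbz_ofNat t n n le_rfl, gb_self]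
        simp [hbig, hbig2]
      · rw [gbz_big t (n+1) (by push_cast; omega), gbz_big t n (by omega), gbz_big t n (by omega)]
        simp

/-- Second Pascal rule, ℤ-indexed. -/
lemma gbz_pascal' (t : R) (n : ℕ) (k : ℤ) :
    gbz t (n+1) k = t ^ ((n+1:ℤ) - k).toNat * gbz t n (k-1) + gbz t n k := by
  rcases lt_trichotomy k 0 with h | rfl | h
  · rw [gbz_neg t _ h, gbz_neg t _ (by omega), gbz_neg t _ h]
    simp
  · rw [gbz_zero_right, gbz_zero_right, gbz_neg t _ (by omega)]
    simp
  · rcases le_or_gt k n with h2 | h2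
    · obtain ⟨m, rfl⟩ : ∃ m : ℕ, k = ((m+1:ℕ):ℤ) := ⟨(k-1).toNat, by push_cast; omega⟩
      have hmn : m + 1 ≤ n := by push_cast at h2; omega
      rw [gbz_ofNat t (n+1) (m+1) (by omega),
        show ((m+1:ℕ):ℤ) - 1 = ((m:ℕ):ℤ) by push_cast; ring,
        gbz_ofNat t n m (by omega), gbz_ofNat t n (m+1) hmn,
        show ((n+1:ℤ) - ((m+1:ℕ):ℤ)).toNat = n - m by omega]
      exact gb_pascal' t n m (by omega)
    · rcases eq_or_lt_of_le (by omega : (n:ℤ)+1 ≤ k) with h3 | h3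
      · have hk : k = ((n+1:ℕ):ℤ) := by push_cast; omega
        subst hk
        have hbig : gbz t n ((n:ℤ)+1) = 0 := gbz_big t n (by omega)
        have hbig2 : gbz t n (((n+1:ℕ)):ℤ) = 0 := gbz_big t n (by push_cast; omega)
        rw [gbz_ofNat t (n+1) (n+1) le_rfl, gb_self,
          show ((n+1:ℕ):ℤ)-1 = ((n:ℕ):ℤ) by push_cast; ring, gbz_ofNat t n n le_rfl, gb_self,
          show ((n+1:ℤ) - ((n+1:ℕ):ℤ)).toNat = 0 by omega]
        simp [hbig, hbig2]
      · rw [gbz_big t (n+1) (by push_cast; omega), gbz_big t n (by omega), gbz_big t n (by omega)]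
        simp

/-- Composed double-step Pascal rule. -/
lemma gbz_pascal_double (t : R) (m : ℕ) (l : ℤ) :
    gbz t (m+2) l = t ^ l.toNat * gbz t m l + (1 + t^(m+1)) * gbz t m (l-1)
      + t ^ ((m+2:ℤ) - l).toNat * gbz t m (l-2) := by
  rcases lt_trichotomy l 0 with h | rfl | h
  · rw [gbz_neg t _ h, gbz_neg t _ h, gbz_neg t _ (by omega), gbz_neg t _ (by omega)]
    ring
  · rw [gbz_zero_right, gbz_zero_right, gbz_neg t _ (by omega), gbz_neg t _ (by omega)]
    simp
  · rcases le_or_gt l (m+2) with h2 | h2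
    · rw [show m+2 = (m+1)+1 from rfl, gbz_pascal' t (m+1) l, gbz_pascal t m (l-1),
        gbz_pascal t m l]
      push_cast
      rw [show l - 1 - 1 = l - 2 by ring]
      have he : t ^ ((m:ℤ) + 1 + 1 - l).toNat * t ^ (l - 1).toNat = t^(m+1) := by
        rw [← pow_add]
        congr 1
        omega
      have he2 : ((m:ℤ) + 1 + 1 - l).toNat = ((m:ℤ) + 2 - l).toNat := by omega
      rw [← he2]
      linear_combination (gbz t m (l-1)) * he
    · rw [gbz_big t (m+2) (by push_cast; omega), gbz_big t m (by omega),
        gbz_big t m (by omega), gbz_big t m (by omega)]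
      simp

end GB


section GBProd
variable {R : Type*} [CommRing R]

/-- Product formula: `B(n,k) * (t;t)_{n-k} = ∏_{i=k+1}^n (1-t^i)`. -/
lemma gb_prod₁ (t : R) : ∀ n k : ℕ, k ≤ n →
    gb t n k * ∏ i ∈ Ioc 0 (n-k), (1 - t^i) = ∏ i ∈ Ioc k n, (1 - t^i)
  | 0, 0, _ => by simp
  | n+1, 0, _ => by simp
  | n+1, k+1, h => by
      rcases eq_or_lt_of_le h with heq | hlt
      · have : k = n := by omega
        subst this
        simp [gb_self]
      · have hk : k + 1 ≤ n := by omega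
        obtain ⟨a, rfl⟩ : ∃ a, n = k+1+a := ⟨n-(k+1), by omega⟩
        have I1 : gb t (k+1+a) k * ∏ i ∈ Ioc 0 (a+1), (1 - t^i) = ∏ i ∈ Ioc k (k+1+a), (1 - t^i) := by
          have := gb_prod₁ t (k+1+a) k (by omega)
          rwa [show k+1+a-k = a+1 by omega] at this
        have I2 : gb t (k+1+a) (k+1) * ∏ i ∈ Ioc 0 a, (1 - t^i) = ∏ i ∈ Ioc (k+1) (k+1+a), (1 - t^i) := by
          have := gb_prod₁ t (k+1+a) (k+1) (by omega)
          rwa [show k+1+a-(k+1) = a by omega] at this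
        have split1 : ∏ i ∈ Ioc k (k+1+a), (1 - t^i)
            = (1 - t^(k+1)) * ∏ i ∈ Ioc (k+1) (k+1+a), (1 - t^i) := by
          rw [← Finset.prod_Ioc_consecutive _ (by omega : k ≤ k+1) (by omega : k+1 ≤ k+1+a),
            Nat.Ioc_succ_singleton, Finset.prod_singleton]
        have split2 : ∏ i ∈ Ioc 0 (a+1), (1 - t^i)
            = (∏ i ∈ Ioc 0 a, (1 - t^i)) * (1 - t^(a+1)) := Finset.prod_Ioc_succ_top (by omega) _
        have split3 : ∏ i ∈ Ioc (k+1) (k+1+a+1), (1 - t^i)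
            = (∏ i ∈ Ioc (k+1) (k+1+a), (1 - t^i)) * (1 - t^(k+1+a+1)) := by
          exact Finset.prod_Ioc_succ_top (by omega) _
        have hsub : k+1+a+1-(k+1) = a+1 := by omega
        rw [hsub, gb_succ_succ, split3]
        have hpow : t^(k+1) * t^(a+1) = t^(k+1+a+1) := by rw [← pow_add]; ring_nf
        calc (gb t (k+1+a) k + t ^ (k+1) * gb t (k+1+a) (k+1)) * ∏ i ∈ Ioc 0 (a+1), (1 - t^i)
            = gb t (k+1+a) k * ∏ i ∈ Ioc 0 (a+1), (1-t^i)
              + t^(k+1) * ((gb t (k+1+a) (k+1) * ∏ i ∈ Ioc 0 a, (1-t^i)) * (1 - t^(a+1))) := by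
                rw [split2]; ring
          _ = (1 - t^(k+1)) * ∏ i ∈ Ioc (k+1) (k+1+a), (1 - t^i)
              + t^(k+1) * ((∏ i ∈ Ioc (k+1) (k+1+a), (1 - t^i)) * (1 - t^(a+1))) := by
                rw [I1, split1, I2]
          _ = (∏ i ∈ Ioc (k+1) (k+1+a), (1 - t^i)) * (1 - t^(k+1+a+1)) := by
                rw [← hpow]; ring

/-- Product formula, symmetric version: `B(n,k) * (t;t)_k = ∏_{i=n-k+1}^n (1-t^i)`. -/
lemma gb_prod₂ (t : R) : ∀ n k : ℕ, k ≤ n →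
    gb t n k * ∏ i ∈ Ioc 0 k, (1 - t^i) = ∏ i ∈ Ioc (n-k) n, (1 - t^i)
  | 0, 0, _ => by simp
  | n+1, 0, _ => by simp
  | n+1, k+1, h => by
      rcases eq_or_lt_of_le h with heq | hlt
      · have : k = n := by omega
        subst this
        simp [gb_self]
      · have hk : k + 1 ≤ n := by omega
        obtain ⟨a, rfl⟩ : ∃ a, n = k+1+a := ⟨n-(k+1), by omega⟩
        have hP : gb t (k+1+a+1) (k+1)
            = t^(a+1) * gb t (k+1+a) k + gb t (k+1+a) (k+1) := by
          have := gb_pascal' t (k+1+a) k (by omega)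
          rwa [show k+1+a-k = a+1 by omega] at this
        have I1 : gb t (k+1+a) k * ∏ i ∈ Ioc 0 k, (1 - t^i) = ∏ i ∈ Ioc (a+1) (k+1+a), (1 - t^i) := by
          have := gb_prod₂ t (k+1+a) k (by omega)
          rwa [show k+1+a-k = a+1 by omega] at this
        have I2 : gb t (k+1+a) (k+1) * ∏ i ∈ Ioc 0 (k+1), (1 - t^i) = ∏ i ∈ Ioc a (k+1+a), (1 - t^i) := by
          have := gb_prod₂ t (k+1+a) (k+1) (by omega)
          rwa [show k+1+a-(k+1) = a by omega] at this
        have split1 : ∏ i ∈ Ioc a (k+1+a), (1 - t^i)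
            = (1 - t^(a+1)) * ∏ i ∈ Ioc (a+1) (k+1+a), (1 - t^i) := by
          rw [← Finset.prod_Ioc_consecutive _ (by omega : a ≤ a+1) (by omega : a+1 ≤ k+1+a),
            Nat.Ioc_succ_singleton, Finset.prod_singleton]
        have split2 : ∏ i ∈ Ioc 0 (k+1), (1 - t^i)
            = (∏ i ∈ Ioc 0 k, (1 - t^i)) * (1 - t^(k+1)) := Finset.prod_Ioc_succ_top (by omega) _
        have split3 : ∏ i ∈ Ioc (a+1) (k+1+a+1), (1 - t^i)
            = (∏ i ∈ Ioc (a+1) (k+1+a), (1 - t^i)) * (1 - t^(k+1+a+1)) :=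
          Finset.prod_Ioc_succ_top (by omega) _
        have hsub : k+1+a+1-(k+1) = a+1 := by omega
        rw [hsub, hP, split3]
        have hpow : t^(a+1) * t^(k+1) = t^(k+1+a+1) := by rw [← pow_add]; congr 1; omega
        calc (t^(a+1) * gb t (k+1+a) k + gb t (k+1+a) (k+1)) * ∏ i ∈ Ioc 0 (k+1), (1 - t^i)
            = t^(a+1) * ((gb t (k+1+a) k * ∏ i ∈ Ioc 0 k, (1-t^i)) * (1 - t^(k+1)))
              + gb t (k+1+a) (k+1) * ∏ i ∈ Ioc 0 (k+1), (1-t^i) := by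
                rw [split2]; ring
          _ = t^(a+1) * ((∏ i ∈ Ioc (a+1) (k+1+a), (1 - t^i)) * (1 - t^(k+1)))
              + (1 - t^(a+1)) * ∏ i ∈ Ioc (a+1) (k+1+a), (1 - t^i) := by
                rw [I1, I2, split1]
          _ = (∏ i ∈ Ioc (a+1) (k+1+a), (1 - t^i)) * (1 - t^(k+1+a+1)) := by
                rw [← hpow]; ring

end GBProd

section JTP
variable {R : Type*} [CommRing R]

/-- `(N-l)^2` as a natural number, symmetric truncated-subtraction version. -/
def esq (N l : ℕ) : ℕ := (N - l)^2 + (l - N)^2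

lemma esq_cast (N l : ℕ) : (esq N l : ℤ) = ((N:ℤ) - l)^2 := by
  rcases le_total N l with h | h
  · rw [esq, Nat.sub_eq_zero_of_le h]
    have : (N:ℤ) - l = -((l:ℤ) - N) := by ring
    rw [this]
    push_cast [h]
    ring
  · rw [esq, Nat.sub_eq_zero_of_le h]
    push_cast [h]
    ring

/-- Pointwise identity for the JTP induction step. -/
lemma jtp_pointwise (q x : R) (N : ℕ) (l : ℕ) (hl : l < 2*N+3) :
    gbz (q^2) (2*N+2) (l:ℤ) * q^(esq (N+1) l) * x^l
      = gbz (q^2) (2*N) ((l:ℤ)-1) * q^(esq N (l-1)) * x^l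
      + gbz (q^2) (2*N) ((l:ℤ)-1) * q^(esq N (l-1) + (4*N+2)) * x^l
      + gbz (q^2) (2*N) (l:ℤ) * q^(esq N l + (2*N+1)) * x^l
      + gbz (q^2) (2*N) ((l:ℤ)-2) * q^(esq N (l-2) + (2*N+1)) * x^l := by
  have hdbl := gbz_pascal_double (q^2) (2*N) (l:ℤ)
  match l with
  | 0 =>
      rw [gbz_neg (q^2) (2*N) (show ((0:ℕ):ℤ)-1 < 0 by norm_num),
        gbz_neg (q^2) (2*N) (show ((0:ℕ):ℤ)-2 < 0 by norm_num)]
      simp only [Nat.cast_zero, gbz_zero_right, pow_zero, mul_one, zero_mul, add_zero, zero_add,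
        one_mul, mul_zero]
      congr 1
      have : (esq (N+1) 0 : ℤ) = (esq N 0 + (2*N+1) : ℕ) := by
        push_cast [esq_cast]; ring
      exact_mod_cast this
  | 1 =>
      rw [hdbl, Nat.cast_one,
        show (1:ℤ) - 1 = 0 by norm_num, show (1:ℤ) - 2 = -1 by norm_num,
        gbz_neg (q^2) (2*N) (show (-1:ℤ) < 0 by norm_num),
        show ((1:ℤ)).toNat = 1 from rfl, gbz_zero_right,
        show (1:ℕ)-1 = 0 from rfl]
      have e1 : esq (N+1) 1 = esq N 0 := by
        have : (esq (N+1) 1 : ℤ) = (esq N 0 : ℤ) := by rw [esq_cast, esq_cast]; push_cast; ring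
        exact_mod_cast this
      rw [e1]
      have e2 : (q^2)^1 * q^(esq N 0) = q^(esq N 1 + (2*N+1)) := by
        rw [← pow_mul, ← pow_add]
        congr 1
        have : ((2*1 + esq N 0 : ℕ) : ℤ) = ((esq N 1 + (2*N+1) : ℕ) : ℤ) := by
          push_cast [esq_cast]; ring
        exact_mod_cast this
      have e3 : (q^2)^(2*N+1) * q^(esq N 0) = q^(esq N 0 + (4*N+2)) := by
        rw [← pow_mul, ← pow_add]
        congr 1
        omega
      linear_combination (x^1 * gbz (q^2) (2*N) 1) * e2 + (x^1 * gbz (q^2) (2*N) 0) * e3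
  | (k+2) =>
      have hk : k ≤ 2*N := by omega
      rw [hdbl,
        show ((k+2:ℕ):ℤ) - 1 = ((k+1:ℕ):ℤ) by push_cast; ring,
        show ((k+2:ℕ):ℤ) - 2 = ((k:ℕ):ℤ) by push_cast; ring,
        show (((k+2:ℕ):ℤ)).toNat = k+2 by omega,
        show (((2*N:ℕ):ℤ) + 2 - ((k+2:ℕ):ℤ)).toNat = 2*N - k by omega,
        show (k+2) - 1 = k+1 by omega, show (k+2) - 2 = k by omega]
      have hky : esq (N+1) (k+2) = esq N (k+1) := by
        have : (esq (N+1) (k+2) : ℤ) = (esq N (k+1) : ℤ) := by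
          rw [esq_cast, esq_cast]; push_cast; ring
        exact_mod_cast this
      rw [hky]
      have ha : (q^2)^(k+2) * q^(esq N (k+1)) = q^(esq N (k+2) + (2*N+1)) := by
        rw [← pow_mul, ← pow_add]
        congr 1
        have : ((2*(k+2) + esq N (k+1) : ℕ) : ℤ) = ((esq N (k+2) + (2*N+1) : ℕ) : ℤ) := by
          push_cast [esq_cast]; ring
        exact_mod_cast this
      have hc : (q^2)^(2*N-k) * q^(esq N (k+1)) = q^(esq N k + (2*N+1)) := by
        rw [← pow_mul, ← pow_add]
        congr 1
        have : ((2*(2*N-k) + esq N (k+1) : ℕ) : ℤ) = ((esq N k + (2*N+1) : ℕ) : ℤ) := by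
          push_cast [esq_cast, Nat.cast_sub hk]; ring
        exact_mod_cast this
      have hd : (q^2)^(2*N+1) * q^(esq N (k+1)) = q^(esq N (k+1) + (4*N+2)) := by
        rw [← pow_mul, ← pow_add]
        congr 1
        omega
      linear_combination (x^(k+2) * gbz (q^2) (2*N) ((k+2:ℕ):ℤ)) * ha
        + (x^(k+2) * gbz (q^2) (2*N) ((k:ℕ):ℤ)) * hc
        + (x^(k+2) * gbz (q^2) (2*N) ((k+1:ℕ):ℤ)) * hd

/-- Finite Jacobi triple product (one-sided form). -/
lemma jtp (q x : R) : ∀ N : ℕ, (∏ m ∈ Finset.Ioc 0 N, ((1 + x*q^(2*m-1)) * (x + q^(2*m-1))))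
    = ∑ l ∈ Finset.range (2*N+1), gbz (q^2) (2*N) (l:ℤ) * q^(esq N l) * x^l
  | 0 => by simp [esq]
  | N+1 => by
      have IH := jtp q x N
      have hprod : (∏ m ∈ Finset.Ioc 0 (N+1), ((1 + x*q^(2*m-1)) * (x + q^(2*m-1))))
          = (∏ m ∈ Finset.Ioc 0 N, ((1 + x*q^(2*m-1)) * (x + q^(2*m-1))))
            * ((1 + x*q^(2*N+1)) * (x + q^(2*N+1))) := by
        rw [Finset.prod_Ioc_succ_top (Nat.zero_le _)]
        congr 3 <;> omega
      set SN := ∑ l ∈ Finset.range (2*N+1), gbz (q^2) (2*N) (l:ℤ) * q^(esq N l) * x^l with hSN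
      have key : ∑ l ∈ Finset.range (2*N+3), gbz (q^2) (2*N+2) (l:ℤ) * q^(esq (N+1) l) * x^l
          = SN * x + SN * x * q^(4*N+2) + SN * q^(2*N+1) + SN * q^(2*N+1) * x^2 := by
        have hpt : ∀ l ∈ Finset.range (2*N+3),
            gbz (q^2) (2*N+2) (l:ℤ) * q^(esq (N+1) l) * x^l
            = gbz (q^2) (2*N) ((l:ℤ)-1) * q^(esq N (l-1)) * x^l
            + gbz (q^2) (2*N) ((l:ℤ)-1) * q^(esq N (l-1) + (4*N+2)) * x^l
            + gbz (q^2) (2*N) (l:ℤ) * q^(esq N l + (2*N+1)) * x^l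
            + gbz (q^2) (2*N) ((l:ℤ)-2) * q^(esq N (l-2) + (2*N+1)) * x^l := by
          intro l hl
          exact jtp_pointwise q x N l (Finset.mem_range.mp hl)
        rw [Finset.sum_congr rfl hpt]
        rw [Finset.sum_add_distrib, Finset.sum_add_distrib, Finset.sum_add_distrib]
        have p1 : ∑ l ∈ Finset.range (2*N+3), gbz (q^2) (2*N) ((l:ℤ)-1) * q^(esq N (l-1)) * x^l
            = SN * x := by
          rw [Finset.sum_range_succ', hSN, Finset.sum_mul]
          have h0 : gbz (q^2) (2*N) (((0:ℕ):ℤ)-1) * q^(esq N (0-1)) * x^0 = 0 := by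
            rw [gbz_neg (q^2) (2*N) (by norm_num)]; ring
          rw [h0, add_zero]
          rw [Finset.sum_range_succ]
          have htop : gbz (q^2) (2*N) (((2*N+1+1:ℕ):ℤ)-1) * q^(esq N ((2*N+1+1)-1)) * x^(2*N+1+1) = 0 := by
            rw [show ((2*N+1+1:ℕ):ℤ)-1 = ((2*N+1:ℕ):ℤ) by push_cast; ring,
              gbz_big (q^2) (2*N) (by push_cast; omega)]
            ring
          rw [htop, add_zero]
          apply Finset.sum_congr rfl
          intro i _
          rw [show ((i+1:ℕ):ℤ)-1 = ((i:ℕ):ℤ) by push_cast; ring, show (i+1)-1 = i by omega]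
          ring
        have p2 : ∑ l ∈ Finset.range (2*N+3), gbz (q^2) (2*N) ((l:ℤ)-1) * q^(esq N (l-1) + (4*N+2)) * x^l
            = SN * x * q^(4*N+2) := by
          rw [Finset.sum_range_succ', hSN, Finset.sum_mul, Finset.sum_mul]
          have h0 : gbz (q^2) (2*N) (((0:ℕ):ℤ)-1) * q^(esq N (0-1) + (4*N+2)) * x^0 = 0 := by
            rw [gbz_neg (q^2) (2*N) (by norm_num)]; ring
          rw [h0, add_zero]
          rw [Finset.sum_range_succ]
          have htop : gbz (q^2) (2*N) (((2*N+1+1:ℕ):ℤ)-1) * q^(esq N ((2*N+1+1)-1) + (4*N+2)) * x^(2*N+1+1) = 0 := by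
            rw [show ((2*N+1+1:ℕ):ℤ)-1 = ((2*N+1:ℕ):ℤ) by push_cast; ring,
              gbz_big (q^2) (2*N) (by push_cast; omega)]
            ring
          rw [htop, add_zero]
          apply Finset.sum_congr rfl
          intro i _
          rw [show ((i+1:ℕ):ℤ)-1 = ((i:ℕ):ℤ) by push_cast; ring, show (i+1)-1 = i by omega,
            pow_add]
          ring
        have p3 : ∑ l ∈ Finset.range (2*N+3), gbz (q^2) (2*N) (l:ℤ) * q^(esq N l + (2*N+1)) * x^l
            = SN * q^(2*N+1) := by
          rw [show 2*N+3 = (2*N+2)+1 by omega, Finset.sum_range_succ, Finset.sum_range_succ]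
          have h1 : gbz (q^2) (2*N) ((2*N+1:ℕ):ℤ) * q^(esq N (2*N+1) + (2*N+1)) * x^(2*N+1) = 0 := by
            rw [gbz_big (q^2) (2*N) (by push_cast; omega)]; ring
          have h2 : gbz (q^2) (2*N) ((2*N+2:ℕ):ℤ) * q^(esq N (2*N+2) + (2*N+1)) * x^(2*N+2) = 0 := by
            rw [gbz_big (q^2) (2*N) (by push_cast; omega)]; ring
          rw [h1, h2, add_zero, add_zero, hSN, Finset.sum_mul]
          apply Finset.sum_congr rfl
          intro i _
          rw [pow_add]
          ring
        have p4 : ∑ l ∈ Finset.range (2*N+3), gbz (q^2) (2*N) ((l:ℤ)-2) * q^(esq N (l-2) + (2*N+1)) * x^l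
            = SN * q^(2*N+1) * x^2 := by
          rw [Finset.sum_range_succ', Finset.sum_range_succ']
          have h0 : gbz (q^2) (2*N) (((0:ℕ):ℤ)-2) * q^(esq N (0-2) + (2*N+1)) * x^0 = 0 := by
            rw [gbz_neg (q^2) (2*N) (by norm_num)]; ring
          have h1 : gbz (q^2) (2*N) (((0+1:ℕ):ℤ)-2) * q^(esq N ((0+1)-2) + (2*N+1)) * x^(0+1) = 0 := by
            rw [show ((0+1:ℕ):ℤ)-2 = -1 by norm_num, gbz_neg (q^2) (2*N) (by norm_num)]; ring
          rw [h0, h1, add_zero, add_zero, hSN, Finset.sum_mul, Finset.sum_mul]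
          apply Finset.sum_congr rfl
          intro i _
          rw [show ((i+1+1:ℕ):ℤ)-2 = ((i:ℕ):ℤ) by push_cast; ring, show (i+1+1)-2 = i by omega,
            pow_add]
          ring
        rw [p1, p2, p3, p4]
      rw [hprod, IH, show 2*(N+1)+1 = 2*N+3 by ring, show 2*(N+1) = 2*N+2 by ring, key]
      ring

end JTP

section MOD16
variable {R : Type*} [CommRing R]

/-- mod-16 inverse of `(1-2w)^(j+1)`. -/
lemma inv16_pow1 (w : R) : ∀ j : ℕ, ∃ (c₂ c₃ : ℤ) (y : R),
    (1 - 2*w)^(j+1) * (1 + ((2*(j+1):ℤ):R)*w + ((4*c₂:ℤ):R)*w^2 + ((8*c₃:ℤ):R)*w^3) = 1 + 16*y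
  | 0 => by
      refine ⟨1, 1, -w^4, ?_⟩
      push_cast
      ring
  | j+1 => by
      obtain ⟨c₂, c₃, y, hy⟩ := inv16_pow1 w j
      refine ⟨c₂ + (j+2), c₃ + c₂ + (j+2), y + (1-2*w)^(j+1) * ((-(c₃+c₂+(j:ℤ)+2) : ℤ):R) * w^4, ?_⟩
      have key : (1-2*w) * (1 + ((2*(j+1+1):ℤ):R)*w + ((4*(c₂+(j+2)):ℤ):R)*w^2
            + ((8*(c₃+c₂+(j+2)):ℤ):R)*w^3)
          = (1 + ((2*(j+1):ℤ):R)*w + ((4*c₂:ℤ):R)*w^2 + ((8*c₃:ℤ):R)*w^3)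
            + 16 * (((-(c₃+c₂+(j:ℤ)+2) : ℤ):R) * w^4) := by
        push_cast
        ring
      calc (1-2*w)^(j+1+1) * (1 + ((2*(j+1+1):ℤ):R)*w + ((4*(c₂+(j+2)):ℤ):R)*w^2
            + ((8*(c₃+c₂+(j+2)):ℤ):R)*w^3)
          = (1-2*w)^(j+1) * ((1-2*w) * (1 + ((2*(j+1+1):ℤ):R)*w + ((4*(c₂+(j+2)):ℤ):R)*w^2
              + ((8*(c₃+c₂+(j+2)):ℤ):R)*w^3)) := by ring
        _ = (1-2*w)^(j+1) * ((1 + ((2*(j+1):ℤ):R)*w + ((4*c₂:ℤ):R)*w^2 + ((8*c₃:ℤ):R)*w^3)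
              + 16 * (((-(c₃+c₂+(j:ℤ)+2) : ℤ):R) * w^4)) := by rw [key]
        _ = (1 + 16*y) + 16 * ((1-2*w)^(j+1) * ((-(c₃+c₂+(j:ℤ)+2) : ℤ):R) * w^4) := by
              rw [mul_add, hy]; ring
        _ = 1 + 16 * (y + (1-2*w)^(j+1) * ((-(c₃+c₂+(j:ℤ)+2) : ℤ):R) * w^4) := by ring

/-- mod-16 inverse of `(1-2w)^(2j+2)`. -/
lemma inv16_pow2 (w : R) : ∀ j : ℕ, ∃ y : R,
    (1 - 2*w)^(2*j+2) * (1 + ((4*(j+1):ℤ):R)*w + ((4*(j+1)*(2*j+3):ℤ):R)*w^2) = 1 + 16*y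
  | 0 => by
      refine ⟨-2*w^3 + 3*w^4, ?_⟩
      push_cast
      ring
  | j+1 => by
      obtain ⟨y, hy⟩ := inv16_pow2 w j
      set Q : R := ((-8 - 8*(j:ℤ) - 2*(j:ℤ)^2 : ℤ):R) * w^3 + ((10 + 9*(j:ℤ) + 2*(j:ℤ)^2 : ℤ):R) * w^4 with hQ
      refine ⟨y + (1-2*w)^(2*j+2) * Q, ?_⟩
      have key : (1-2*w)^2 * (1 + ((4*(j+1+1):ℤ):R)*w + ((4*(j+1+1)*(2*(j+1)+3):ℤ):R)*w^2)
          = (1 + ((4*(j+1):ℤ):R)*w + ((4*(j+1)*(2*j+3):ℤ):R)*w^2) + 16 * Q := by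
        rw [hQ]
        push_cast
        ring
      calc (1-2*w)^(2*(j+1)+2) * (1 + ((4*(j+1+1):ℤ):R)*w + ((4*(j+1+1)*(2*(j+1)+3):ℤ):R)*w^2)
          = (1-2*w)^(2*j+2) * ((1-2*w)^2 * (1 + ((4*(j+1+1):ℤ):R)*w
              + ((4*(j+1+1)*(2*(j+1)+3):ℤ):R)*w^2)) := by
            rw [show 2*(j+1)+2 = (2*j+2)+2 by ring, pow_add]
            ring
        _ = (1-2*w)^(2*j+2) * ((1 + ((4*(j+1):ℤ):R)*w + ((4*(j+1)*(2*j+3):ℤ):R)*w^2) + 16 * Q) := by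
            rw [key]
        _ = (1 + 16*y) + 16 * ((1-2*w)^(2*j+2) * Q) := by rw [mul_add, hy]; ring
        _ = 1 + 16 * (y + (1-2*w)^(2*j+2) * Q) := by ring

/-- mod-16 inverse of `(1-2w)^(12j+11)`. -/
lemma inv16_pow3 (w : R) : ∀ j : ℕ, ∃ y : R,
    (1 - 2*w)^(12*j+11) * (1 + ((8*(j:ℤ)+6:ℤ):R)*w + ((8*((j:ℤ)+1):ℤ):R)*w^2) = 1 + 16*y
  | 0 => by
      refine ⟨-w + 6*w^2 - 11*w^3 - 55*w^4 + 396*w^5 - 1056*w^6 + 1056*w^7 + 1584*w^8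
        - 7040*w^9 + 11264*w^10 - 9984*w^11 + 4864*w^12 - 1024*w^13, ?_⟩
      push_cast
      ring
  | j+1 => by
      obtain ⟨y, hy⟩ := inv16_pow3 w j
      set J : R := ((j:ℤ):R) with hJ
      set Q : R := -w + (-4 - 12*J)*w^2 + (97 + 120*J)*w^3 + (-781 - 748*J)*w^4
        + (3586 + 3080*J)*w^5 + (-10560 - 8712*J)*w^6 + (20064 + 16896*J)*w^7
        + (-21648 - 21120*J)*w^8 + (2464 + 12672*J)*w^9 + (32384 + 7040*J)*w^10
        + (-55040 - 22528*J)*w^11 + (46336 + 21504*J)*w^12 + (-20992 - 10240*J)*w^13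
        + (4096 + 2048*J)*w^14 with hQ
      refine ⟨y + (1-2*w)^(12*j+11) * Q, ?_⟩
      have key : (1-2*w)^12 * (1 + ((8*((j:ℤ)+1)+6:ℤ):R)*w + ((8*(((j:ℤ)+1)+1):ℤ):R)*w^2)
          = (1 + ((8*(j:ℤ)+6:ℤ):R)*w + ((8*((j:ℤ)+1):ℤ):R)*w^2) + 16 * Q := by
        rw [hQ, hJ]
        push_cast
        ring
      calc (1-2*w)^(12*(j+1)+11) * (1 + ((8*((j:ℤ)+1)+6:ℤ):R)*w + ((8*(((j:ℤ)+1)+1):ℤ):R)*w^2)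
          = (1-2*w)^(12*j+11) * ((1-2*w)^12 * (1 + ((8*((j:ℤ)+1)+6:ℤ):R)*w
              + ((8*(((j:ℤ)+1)+1):ℤ):R)*w^2)) := by
            rw [show 12*(j+1)+11 = (12*j+11)+12 by ring, pow_add]
            ring
        _ = (1-2*w)^(12*j+11) * ((1 + ((8*(j:ℤ)+6:ℤ):R)*w + ((8*((j:ℤ)+1):ℤ):R)*w^2) + 16 * Q) := by
            rw [key]
        _ = (1 + 16*y) + 16 * ((1-2*w)^(12*j+11) * Q) := by rw [mul_add, hy]; ring
        _ = 1 + 16 * (y + (1-2*w)^(12*j+11) * Q) := by ring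

end MOD16

section Theta
open PowerSeries

abbrev ZX := PowerSeries ℤ

lemma dvd_sub_one_mul {d a b : ZX} (ha : d ∣ a - 1) (hb : d ∣ b - 1) : d ∣ a * b - 1 := by
  have h : a * b - 1 = (a - 1) * b + (b - 1) := by ring
  rw [h]
  exact dvd_add (ha.mul_right _) hb

lemma dvd_sub_one_prod {d : ZX} {s : Finset ℕ} {f : ℕ → ZX} (h : ∀ i ∈ s, d ∣ f i - 1) :
    d ∣ (∏ i ∈ s, f i) - 1 := by
  classical
  induction s using Finset.cons_induction with
  | empty => simp
  | cons a s ha ih =>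
      rw [Finset.prod_cons]
      exact dvd_sub_one_mul (h a (Finset.mem_cons_self _ _))
        (ih fun i hi => h i (Finset.mem_cons_of_mem hi))

lemma dvd_cong_mul {d A B C D : ZX} (h1 : d ∣ A - B) (h2 : d ∣ C - D) : d ∣ A*C - B*D := by
  have h : A*C - B*D = (A-B)*C + B*(C-D) := by ring
  rw [h]
  exact dvd_add (h1.mul_right _) (h2.mul_left _)

lemma dvd_cong_pow {d A B : ZX} (h : d ∣ A - B) : ∀ k : ℕ, d ∣ A^k - B^k
  | 0 => by simp
  | k+1 => by
      have h2 := dvd_cong_mul h (dvd_cong_pow h k)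
      rwa [← pow_succ', ← pow_succ'] at h2

lemma neg_one_pow_congr_ZX {a b : ℕ} (h : a % 2 = b % 2) : (-1 : ZX)^a = (-1 : ZX)^b := by
  rcases Nat.even_or_odd a with he | ho
  · have ha : a % 2 = 0 := Nat.even_iff.mp he
    rw [he.neg_one_pow, (Nat.even_iff.mpr (by omega : b % 2 = 0)).neg_one_pow]
  · have ha : a % 2 = 1 := Nat.odd_iff.mp ho
    rw [ho.neg_one_pow, (Nat.odd_iff.mpr (by omega : b % 2 = 1)).neg_one_pow]

lemma esq_left (M l : ℕ) (h : l ≤ M) : esq M l = (M - l)^2 := by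
  rw [esq, Nat.sub_eq_zero_of_le h]
  ring_nf

lemma esq_right (M l : ℕ) (h : M ≤ l) : esq M l = (l - M)^2 := by
  rw [esq, Nat.sub_eq_zero_of_le h]
  ring_nf

/-- The alternating theta sum. -/
lemma theta_sum (q : ZX) (M : ℕ) :
    ∑ l ∈ Finset.range (2*M+1), (-1:ZX)^(M+l) * q^(esq M l)
      = 1 + 2 * ∑ r ∈ Finset.Ioc 0 M, (-1:ZX)^r * q^(r^2) := by
  rw [Finset.range_eq_Ico,
    ← Finset.sum_Ico_consecutive _ (show 0 ≤ M by omega) (show M ≤ 2*M+1 by omega),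
    ← Finset.sum_Ico_consecutive _ (show M ≤ M+1 by omega) (show M+1 ≤ 2*M+1 by omega)]
  have hMterm : ∑ l ∈ Finset.Ico M (M+1), (-1:ZX)^(M+l) * q^(esq M l) = 1 := by
    rw [Nat.Ico_succ_singleton, Finset.sum_singleton, esq_right M M le_rfl, Nat.sub_self]
    have hev : Even (M + M) := ⟨M, by ring⟩
    rw [hev.neg_one_pow]
    simp
  have hA : ∑ l ∈ Finset.Ico 0 M, (-1:ZX)^(M+l) * q^(esq M l)
      = ∑ r ∈ Finset.Ioc 0 M, (-1:ZX)^r * q^(r^2) := by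
    apply Finset.sum_bij' (i := fun l _ => M - l) (j := fun r _ => M - r)
    · intro a ha
      rw [Finset.mem_Ico] at ha
      rw [Finset.mem_Ioc]
      omega
    · intro a ha
      rw [Finset.mem_Ioc] at ha
      rw [Finset.mem_Ico]
      omega
    · intro a ha
      rw [Finset.mem_Ico] at ha
      omega
    · intro a ha
      rw [Finset.mem_Ioc] at ha
      omega
    · intro a ha
      rw [Finset.mem_Ico] at ha
      rw [esq_left M a (by omega)]
      congr 1
      exact neg_one_pow_congr_ZX (by omega)
  have hB : ∑ l ∈ Finset.Ico (M+1) (2*M+1), (-1:ZX)^(M+l) * q^(esq M l)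
      = ∑ r ∈ Finset.Ioc 0 M, (-1:ZX)^r * q^(r^2) := by
    apply Finset.sum_bij' (i := fun l _ => l - M) (j := fun r _ => M + r)
    · intro a ha
      rw [Finset.mem_Ico] at ha
      rw [Finset.mem_Ioc]
      omega
    · intro a ha
      rw [Finset.mem_Ioc] at ha
      rw [Finset.mem_Ico]
      omega
    · intro a ha
      rw [Finset.mem_Ico] at ha
      omega
    · intro a ha
      rw [Finset.mem_Ioc] at ha
      omega
    · intro a ha
      rw [Finset.mem_Ico] at ha
      rw [esq_right M a (by omega)]
      congr 1
      exact neg_one_pow_congr_ZX (by omega)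
  rw [hA, hB, hMterm]
  ring

/-- Parity split of the truncated Euler product. -/
lemma parity_split (q : ZX) : ∀ M : ℕ, ∏ m ∈ Finset.Ioc 0 (2*M), (1 - q^m)
    = (∏ m ∈ Finset.Ioc 0 M, (1 - q^(2*m-1))) * (∏ m ∈ Finset.Ioc 0 M, (1 - q^(2*m)))
  | 0 => by simp
  | M+1 => by
      have IH := parity_split q M
      rw [show 2*(M+1) = (2*M+1)+1 by ring, Finset.prod_Ioc_succ_top (Nat.zero_le _),
        Finset.prod_Ioc_succ_top (show (0:ℕ) ≤ 2*M by omega), IH,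
        Finset.prod_Ioc_succ_top (Nat.zero_le _) (f := fun m => 1 - q^(2*m-1)),
        Finset.prod_Ioc_succ_top (Nat.zero_le _) (f := fun m => 1 - q^(2*m))]
      rw [show 2*(M+1)-1 = 2*M+1 by omega]
      ring

/-- Per-term truncation estimate. -/
lemma theta_term (q : ZX) (M : ℕ) (hq : ∀ K : ℕ, M ≤ K → (X:ZX)^M ∣ q^K)
    (l : ℕ) (hl : l < 2*M+1) :
    (X:ZX)^M ∣ q^(esq M l) * (gbz (q^2) (2*M) (l:ℤ) * (∏ m ∈ Finset.Ioc 0 M, (1 - (q^2)^m)) - 1) := by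
  have hgbz : gbz (q^2) (2*M) (l:ℤ) = gb (q^2) (2*M) l := gbz_ofNat _ _ _ (by omega)
  have hfac : ∀ (J : ℕ) (i : ℕ), J ≤ i → q^(2*J) ∣ (1 - (q^2)^i) - 1 := by
    intro J i hJ
    have : (1 - (q^2)^i) - 1 = -(q^(2*i)) := by rw [← pow_mul]; ring
    rw [this]
    exact (pow_dvd_pow q (by omega)).neg_right
  rcases le_or_gt M l with hMl | hlM
  · -- l ≥ M
    have e1 := gb_prod₁ (q^2) (2*M) l (by omega)
    have hsplit : (∏ i ∈ Finset.Ioc 0 (2*M - l), (1 - (q^2)^i))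
        * (∏ i ∈ Finset.Ioc (2*M - l) M, (1 - (q^2)^i)) = ∏ i ∈ Finset.Ioc 0 M, (1 - (q^2)^i) :=
      Finset.prod_Ioc_consecutive _ (by omega) (by omega)
    have key : gb (q^2) (2*M) l * (∏ m ∈ Finset.Ioc 0 M, (1 - (q^2)^m))
        = (∏ i ∈ Finset.Ioc l (2*M), (1 - (q^2)^i)) * (∏ i ∈ Finset.Ioc (2*M - l) M, (1 - (q^2)^i)) := by
      rw [← hsplit, ← mul_assoc, e1]
    have hd : q^(2*(2*M-l+1)) ∣ gb (q^2) (2*M) l * (∏ m ∈ Finset.Ioc 0 M, (1 - (q^2)^m)) - 1 := by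
      rw [key]
      apply dvd_sub_one_mul
      · apply dvd_sub_one_prod
        intro i hi
        rw [Finset.mem_Ioc] at hi
        exact hfac _ i (by omega)
      · apply dvd_sub_one_prod
        intro i hi
        rw [Finset.mem_Ioc] at hi
        exact hfac _ i (by omega)
    obtain ⟨Z, hZ⟩ := hd
    rw [hgbz, hZ, ← mul_assoc, ← pow_add]
    apply Dvd.dvd.mul_right
    apply hq
    rw [esq_right M l hMl]
    have hss : l - M ≤ M := by omega
    have hlM2 : M ≤ l := hMl
    zify [hss, hlM2, show M ≤ 2*M by omega, show l ≤ 2*M by omega]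
    nlinarith [sq_nonneg (((l:ℤ) - M) - 1)]
  · -- l < M
    have e2 := gb_prod₂ (q^2) (2*M) l (by omega)
    have hsplit : (∏ i ∈ Finset.Ioc 0 l, (1 - (q^2)^i))
        * (∏ i ∈ Finset.Ioc l M, (1 - (q^2)^i)) = ∏ i ∈ Finset.Ioc 0 M, (1 - (q^2)^i) :=
      Finset.prod_Ioc_consecutive _ (by omega) (by omega)
    have key : gb (q^2) (2*M) l * (∏ m ∈ Finset.Ioc 0 M, (1 - (q^2)^m))
        = (∏ i ∈ Finset.Ioc (2*M-l) (2*M), (1 - (q^2)^i)) * (∏ i ∈ Finset.Ioc l M, (1 - (q^2)^i)) := by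
      rw [← hsplit, ← mul_assoc, e2]
    have hd : q^(2*(l+1)) ∣ gb (q^2) (2*M) l * (∏ m ∈ Finset.Ioc 0 M, (1 - (q^2)^m)) - 1 := by
      rw [key]
      apply dvd_sub_one_mul
      · apply dvd_sub_one_prod
        intro i hi
        rw [Finset.mem_Ioc] at hi
        exact hfac _ i (by omega)
      · apply dvd_sub_one_prod
        intro i hi
        rw [Finset.mem_Ioc] at hi
        exact hfac _ i (by omega)
    obtain ⟨Z, hZ⟩ := hd
    rw [hgbz, hZ, ← mul_assoc, ← pow_add]
    apply Dvd.dvd.mul_right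
    apply hq
    rw [esq_left M l (by omega)]
    zify [show l ≤ M by omega]
    nlinarith [sq_nonneg (((M:ℤ) - l) - 1)]

/-- Truncated Gauss identity: `(q;q)^2 ≡ (q^2;q^2)·(1 - 2∑(-1)^(r+1) q^(r^2))` mod `X^M`. -/
lemma theta_gen (q : ZX) (M : ℕ) (hq : ∀ K : ℕ, M ≤ K → (X:ZX)^M ∣ q^K) :
    (X:ZX)^M ∣ (∏ m ∈ Finset.Ioc 0 M, (1 - q^m))^2
      - (∏ m ∈ Finset.Ioc 0 M, (1 - q^(2*m)))
        * (1 - 2 * ∑ r ∈ Finset.Ioc 0 M, (-1:ZX)^(r+1) * q^(r^2)) := by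
  classical
  set Podd := ∏ m ∈ Finset.Ioc 0 M, (1 - q^(2*m-1)) with hPodd
  set Pev := ∏ m ∈ Finset.Ioc 0 M, (1 - q^(2*m)) with hPev
  have hPev2 : Pev = ∏ m ∈ Finset.Ioc 0 M, (1 - (q^2)^m) := by
    rw [hPev]
    exact Finset.prod_congr rfl fun m _ => by rw [← pow_mul]
  -- sign-normalized JTP
  have hjtp := jtp q (-1 : ZX) M
  have hsign : (∏ m ∈ Finset.Ioc 0 M, ((1 + (-1)*q^(2*m-1)) * ((-1) + q^(2*m-1))))
      = (-1:ZX)^M * Podd^2 := by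
    calc (∏ m ∈ Finset.Ioc 0 M, ((1 + (-1)*q^(2*m-1)) * ((-1) + q^(2*m-1))))
        = ∏ m ∈ Finset.Ioc 0 M, ((-1) * (1 - q^(2*m-1))^2) :=
          Finset.prod_congr rfl fun m _ => by ring
      _ = (∏ _m ∈ Finset.Ioc 0 M, (-1:ZX)) * ∏ m ∈ Finset.Ioc 0 M, (1 - q^(2*m-1))^2 :=
          Finset.prod_mul_distrib
      _ = (-1:ZX)^M * Podd^2 := by
          rw [Finset.prod_const, Nat.card_Ioc, Nat.sub_zero, Finset.prod_pow, hPodd]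
  have hP2 : Podd^2 = ∑ l ∈ Finset.range (2*M+1),
      (-1:ZX)^(M+l) * (q^(esq M l) * gbz (q^2) (2*M) (l:ℤ)) := by
    have hev : Even (M + M) := ⟨M, by ring⟩
    have h1 : (-1:ZX)^M * ((-1:ZX)^M * Podd^2) = Podd^2 := by
      rw [← mul_assoc, ← pow_add, hev.neg_one_pow, one_mul]
    rw [← h1, ← hsign, hjtp, Finset.mul_sum]
    apply Finset.sum_congr rfl
    intro l _
    rw [pow_add]
    ring
  -- main congruence: Podd^2 * Pev ≡ 1 + 2∑(-1)^r q^(r^2)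
  have hmain : (X:ZX)^M ∣ Podd^2 * Pev - (1 + 2 * ∑ r ∈ Finset.Ioc 0 M, (-1:ZX)^r * q^(r^2)) := by
    rw [← theta_sum q M, hP2, Finset.sum_mul, ← Finset.sum_sub_distrib]
    apply Finset.dvd_sum
    intro l hl
    have h := theta_term q M hq l (Finset.mem_range.mp hl)
    have heq : (-1:ZX)^(M+l) * (q^(esq M l) * gbz (q^2) (2*M) (l:ℤ)) * Pev
        - (-1:ZX)^(M+l) * q^(esq M l)
        = (-1:ZX)^(M+l) * (q^(esq M l) * (gbz (q^2) (2*M) (l:ℤ)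
            * (∏ m ∈ Finset.Ioc 0 M, (1 - (q^2)^m)) - 1)) := by
      rw [← hPev2]
      ring
    rw [heq]
    exact h.mul_left _
  -- padding from 2M down to M
  have hpad : (X:ZX)^M ∣ (∏ m ∈ Finset.Ioc 0 (2*M), (1 - q^m)) - (∏ m ∈ Finset.Ioc 0 M, (1 - q^m)) := by
    have hsplit : ∏ m ∈ Finset.Ioc 0 (2*M), (1 - q^m)
        = (∏ m ∈ Finset.Ioc 0 M, (1 - q^m)) * (∏ m ∈ Finset.Ioc M (2*M), (1 - q^m)) :=
      (Finset.prod_Ioc_consecutive _ (by omega) (by omega)).symm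
    have htail : (X:ZX)^M ∣ (∏ m ∈ Finset.Ioc M (2*M), (1 - q^m)) - 1 := by
      apply dvd_sub_one_prod
      intro i hi
      rw [Finset.mem_Ioc] at hi
      have h2 : (1 - q^i) - 1 = -(q^i) := by ring
      rw [h2]
      exact (hq i (by omega)).neg_right
    have hid : (∏ m ∈ Finset.Ioc 0 (2*M), (1 - q^m)) - (∏ m ∈ Finset.Ioc 0 M, (1 - q^m))
        = (∏ m ∈ Finset.Ioc 0 M, (1 - q^m)) * ((∏ m ∈ Finset.Ioc M (2*M), (1 - q^m)) - 1) := by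
      rw [hsplit]
      ring
    rw [hid]
    exact htail.mul_left _
  -- assemble
  have hsq : (X:ZX)^M ∣ (∏ m ∈ Finset.Ioc 0 M, (1 - q^m))^2 - (Podd^2 * Pev) * Pev := by
    have h2M : (∏ m ∈ Finset.Ioc 0 (2*M), (1 - q^m))^2 = (Podd^2 * Pev) * Pev := by
      rw [parity_split q M, ← hPodd, ← hPev]
      ring
    have := dvd_cong_pow (dvd_sub_comm.mp hpad) 2
    rwa [h2M] at this
  have hU : (1 : ZX) - 2 * ∑ r ∈ Finset.Ioc 0 M, (-1:ZX)^(r+1) * q^(r^2)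
      = 1 + 2 * ∑ r ∈ Finset.Ioc 0 M, (-1:ZX)^r * q^(r^2) := by
    have h : ∀ r ∈ Finset.Ioc 0 M, (-1:ZX)^(r+1) * q^(r^2) = -((-1:ZX)^r * q^(r^2)) :=
      fun r _ => by rw [pow_succ]; ring
    rw [Finset.sum_congr rfl h, Finset.sum_neg_distrib]
    ring
  rw [hU]
  have hfin : (∏ m ∈ Finset.Ioc 0 M, (1 - q^m))^2
      - Pev * (1 + 2 * ∑ r ∈ Finset.Ioc 0 M, (-1:ZX)^r * q^(r^2))
      = ((∏ m ∈ Finset.Ioc 0 M, (1 - q^m))^2 - (Podd^2 * Pev) * Pev)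
        + (Podd^2 * Pev - (1 + 2 * ∑ r ∈ Finset.Ioc 0 M, (-1:ZX)^r * q^(r^2))) * Pev := by
    ring
  rw [hfin]
  exact dvd_add hsq (hmain.mul_right _)

end Theta

section Instances
open PowerSeries

lemma theta_c (c M : ℕ) (hc : 1 ≤ c) :
    (X:ZX)^M ∣ (∏ m ∈ Finset.Ioc 0 M, (1 - (X:ZX)^(c*m)))^2
      - (∏ m ∈ Finset.Ioc 0 M, (1 - (X:ZX)^(2*c*m)))
        * (1 - 2 * ∑ r ∈ Finset.Ioc 0 M, (-1:ZX)^(r+1) * X^(c*r^2)) := by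
  have hq : ∀ K : ℕ, M ≤ K → (X:ZX)^M ∣ (X^c)^K := by
    intro K hK
    rw [← pow_mul]
    exact pow_dvd_pow X (le_trans hK (by nlinarith))
  have h := theta_gen (X^c) M hq
  simp only [← pow_mul] at h
  have hrw : ∀ m : ℕ, c*(2*m) = 2*c*m := fun m => by ring
  simp only [hrw] at h
  exact h

lemma dvd_sub_trans {d A B C : ZX} (h1 : d ∣ A - B) (h2 : d ∣ B - C) : d ∣ A - C := by
  have h : A - C = (A - B) + (B - C) := by ring
  rw [h]
  exact dvd_add h1 h2

lemma coeff_mul_tail (i : ℕ) (A tail : ZX) (h : (X:ZX)^(i+1) ∣ tail - 1) :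
    PowerSeries.coeff i (A * tail) = PowerSeries.coeff i A := by
  obtain ⟨Z, hZ⟩ := h
  have h2 : A * tail = A + X^(i+1) * (A * Z) := by
    have : tail = 1 + X^(i+1) * Z := by linear_combination hZ
    rw [this]
    ring
  rw [h2, map_add]
  have h3 : PowerSeries.coeff i (X^(i+1) * (A*Z)) = 0 := by
    have hdvd : (X:ZX)^(i+1) ∣ X^(i+1) * (A*Z) := Dvd.intro _ rfl
    exact PowerSeries.X_pow_dvd_iff.mp hdvd i (by omega)
  rw [h3, add_zero]

lemma tail_one (i M e : ℕ) (c : ℕ) (hc : 1 ≤ c) (hiM : i ≤ M) :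
    (X:ZX)^(i+1) ∣ (∏ m ∈ Finset.Ioc i M, (1 - (X:ZX)^(c*m))^e) - 1 := by
  apply dvd_sub_one_prod
  intro m hm
  rw [Finset.mem_Ioc] at hm
  have h1 : (X:ZX)^(i+1) ∣ (1 - (X:ZX)^(c*m)) - 1 := by
    have : (1 - (X:ZX)^(c*m)) - 1 = -(X^(c*m)) := by ring
    rw [this]
    exact (pow_dvd_pow X (by nlinarith [hm.1])).neg_right
  have h2 := dvd_cong_pow h1 e
  rwa [one_pow] at h2

/-- `X^M` cancellation by a series with nonzero constant coefficient. -/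
lemma dvd_cancel_left (G : ZX) (hG : PowerSeries.constantCoeff G ≠ 0) :
    ∀ (M : ℕ) (H : ZX), (X:ZX)^M ∣ G * H → (X:ZX)^M ∣ H := by
  intro M
  induction M with
  | zero => intro H _; simpa using one_dvd H
  | succ M IH =>
      intro H h
      have hXG : ¬ (X:ZX) ∣ G := by
        rw [PowerSeries.X_dvd_iff]
        exact hG
      have hXH : (X:ZX) ∣ H := by
        have hX : (X:ZX) ∣ G * H := dvd_trans (dvd_pow_self X (Nat.succ_ne_zero M)) h
        rcases (PowerSeries.X_prime.2.2 G H hX) with h' | h'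
        · exact absurd h' hXG
        · exact h'
      obtain ⟨H', rfl⟩ := hXH
      have hc : (X:ZX)^(M+1) ∣ X * (G * H') := by
        have hre : X * (G * H') = G * (X * H') := by ring
        rw [hre]
        exact h
      have hXne : (X:ZX) ≠ 0 := PowerSeries.X_ne_zero
      have h4 : (X:ZX)^M ∣ G * H' := by
        rcases hc with ⟨W, hW⟩
        refine ⟨W, ?_⟩
        apply mul_left_cancel₀ hXne
        rw [hW]
        ring
      have h5 := IH H' h4
      rcases h5 with ⟨W, hW⟩
      exact ⟨W, by rw [hW]; ring⟩

/-- Support contained in multiples of 8. -/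
def Sup8 (A : ZX) : Prop := ∀ i : ℕ, ¬ (8 ∣ i) → PowerSeries.coeff i A = 0

lemma Sup8.one : Sup8 1 := by
  intro i hi
  rw [PowerSeries.coeff_one]
  have : i ≠ 0 := by rintro rfl; exact hi ⟨0, rfl⟩
  simp [this]

lemma Sup8.mul {A B : ZX} (hA : Sup8 A) (hB : Sup8 B) : Sup8 (A * B) := by
  intro i hi
  rw [PowerSeries.coeff_mul]
  apply Finset.sum_eq_zero
  intro p hp
  rw [Finset.HasAntidiagonal.mem_antidiagonal] at hp
  by_cases h8 : 8 ∣ p.1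
  · have : ¬ (8 ∣ p.2) := by
      intro h
      exact hi (by omega)
    rw [hB p.2 this, mul_zero]
  · rw [hA p.1 h8, zero_mul]

lemma Sup8.pow {A : ZX} (hA : Sup8 A) : ∀ e : ℕ, Sup8 (A^e)
  | 0 => by rw [pow_zero]; exact Sup8.one
  | e+1 => by rw [pow_succ]; exact (Sup8.pow hA e).mul hA

lemma Sup8_F8 (M : ℕ) : Sup8 (∏ m ∈ Finset.Ioc 0 M, (1 - (X:ZX)^(8*m))) := by
  classical
  apply Finset.prod_induction _ Sup8 (fun a b => Sup8.mul) Sup8.one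
  intro m _
  intro i hi
  rw [map_sub, PowerSeries.coeff_one, PowerSeries.coeff_X_pow]
  have h1 : i ≠ 0 := by rintro rfl; exact hi ⟨0, rfl⟩
  have h2 : i ≠ 8*m := by rintro rfl; exact hi ⟨m, rfl⟩
  simp [h1, h2]

lemma Sup8_invOfUnit {E : ZX} (hE : Sup8 E) (hE0 : PowerSeries.constantCoeff E = 1)
    (V : ZX) (hEV : E * V = 1) : Sup8 V := by
  intro i
  induction i using Nat.strong_induction_on with
  | _ i IH =>
      intro hi
      have hi0 : i ≠ 0 := by rintro rfl; exact hi ⟨0, rfl⟩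
      have h1 : PowerSeries.coeff i (E * V) = 0 := by
        rw [hEV, PowerSeries.coeff_one]
        simp [hi0]
      rw [PowerSeries.coeff_mul] at h1
      have h2 : ∑ p ∈ Finset.HasAntidiagonal.antidiagonal i, PowerSeries.coeff p.1 E * PowerSeries.coeff p.2 V
          = PowerSeries.coeff i V := by
        rw [Finset.sum_eq_single (0, i)]
        · rw [PowerSeries.coeff_zero_eq_constantCoeff, hE0, one_mul]
        · intro p hp hne
          rw [Finset.HasAntidiagonal.mem_antidiagonal] at hp
          by_cases h8 : 8 ∣ p.1
          · have hb : ¬ (8 ∣ p.2) := fun h => hi (by omega)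
            have hblt : p.2 < i := by
              rcases Nat.lt_or_ge p.2 i with h | h
              · exact h
              · exfalso
                have : p.2 = i := by omega
                have : p.1 = 0 := by omega
                exact hne (by ext <;> simp [this, ‹p.2 = i›])
            rw [IH p.2 hblt hb, mul_zero]
          · rw [hE p.1 h8, zero_mul]
        · intro h
          exact absurd (Finset.HasAntidiagonal.mem_antidiagonal.mpr (by omega)) h
      rw [h2] at h1
      exact h1

end Instances

section Support
open PowerSeries

/-- truncated theta-type sum with stretched exponents -/
noncomputable def UU (c M : ℕ) : ZX := ∑ r ∈ Finset.Ioc 0 M, (-1:ZX)^(r+1) * X^(c*r^2)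

lemma coeff_int_mul (z : ℤ) (P : ZX) (i : ℕ) :
    PowerSeries.coeff i ((z:ZX) * P) = z * PowerSeries.coeff i P := by
  rw [show ((z:ZX)) = PowerSeries.C z from (map_intCast (PowerSeries.C (R := ℤ)) z).symm,
    PowerSeries.coeff_C_mul]

lemma UU_supp {c M i : ℕ} (h : PowerSeries.coeff i (UU c M) ≠ 0) : ∃ r : ℕ, i = c * r^2 := by
  rw [UU, map_sum] at h
  obtain ⟨r, _, hne⟩ := Finset.exists_ne_zero_of_sum_ne_zero h
  refine ⟨r, ?_⟩
  have hC : ((-1:ZX))^(r+1) = PowerSeries.C ((-1)^(r+1)) := by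
    rw [map_pow, map_neg, map_one]
  rw [hC, PowerSeries.coeff_C_mul, PowerSeries.coeff_X_pow] at hne
  by_contra hne2
  simp [hne2] at hne

lemma mul_supp {P Q : ZX} {i : ℕ} (h : PowerSeries.coeff i (P * Q) ≠ 0) :
    ∃ a b : ℕ, a + b = i ∧ PowerSeries.coeff a P ≠ 0 ∧ PowerSeries.coeff b Q ≠ 0 := by
  rw [PowerSeries.coeff_mul] at h
  obtain ⟨p, hp, hne⟩ := Finset.exists_ne_zero_of_sum_ne_zero h
  rw [Finset.HasAntidiagonal.mem_antidiagonal] at hp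
  exact ⟨p.1, p.2, hp, left_ne_zero_of_mul hne, right_ne_zero_of_mul hne⟩

lemma sq_mod8 (r : ℕ) : r^2 % 8 = 0 ∨ r^2 % 8 = 1 ∨ r^2 % 8 = 4 := by
  have h2 : r^2 % 8 = (r % 8)^2 % 8 := by rw [Nat.pow_mod]
  have h : r % 8 < 8 := Nat.mod_lt _ (by norm_num)
  interval_cases hm : (r % 8) <;> norm_num at h2 <;> omega

/-- class-7 exact vanishing -/
def P7 (P : ZX) : Prop := ∀ a : ℕ, a % 8 = 7 → PowerSeries.coeff a P = 0

lemma P7_U1 (M : ℕ) : P7 (UU 1 M) := by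
  intro a ha
  by_contra h
  obtain ⟨r, hr⟩ := UU_supp h
  rcases sq_mod8 r with h8 | h8 | h8 <;> omega

lemma P7_U1U1 (M : ℕ) : P7 (UU 1 M * UU 1 M) := by
  intro i hi
  by_contra h
  obtain ⟨a, b, hab, ha, hb⟩ := mul_supp h
  obtain ⟨r, hr⟩ := UU_supp ha
  obtain ⟨s, hs⟩ := UU_supp hb
  rcases sq_mod8 r with h8 | h8 | h8 <;> rcases sq_mod8 s with h9 | h9 | h9 <;> omega

lemma P7_U1U2 (M : ℕ) : P7 (UU 1 M * UU 2 M) := by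
  intro i hi
  by_contra h
  obtain ⟨a, b, hab, ha, hb⟩ := mul_supp h
  obtain ⟨r, hr⟩ := UU_supp ha
  obtain ⟨s, hs⟩ := UU_supp hb
  rcases sq_mod8 r with h8 | h8 | h8 <;> rcases sq_mod8 s with h9 | h9 | h9 <;> omega

lemma P7_U1U4 (M : ℕ) : P7 (UU 1 M * UU 4 M) := by
  intro i hi
  by_contra h
  obtain ⟨a, b, hab, ha, hb⟩ := mul_supp h
  obtain ⟨r, hr⟩ := UU_supp ha
  obtain ⟨s, hs⟩ := UU_supp hb
  rcases sq_mod8 r with h8 | h8 | h8 <;> rcases sq_mod8 s with h9 | h9 | h9 <;> omega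

lemma P7_U1U2U2 (M : ℕ) : P7 (UU 1 M * (UU 2 M * UU 2 M)) := by
  intro i hi
  by_contra h
  obtain ⟨a, b, hab, ha, hb⟩ := mul_supp h
  obtain ⟨r, hr⟩ := UU_supp ha
  obtain ⟨b1, b2, hb12, hb1, hb2⟩ := mul_supp hb
  obtain ⟨s, hs⟩ := UU_supp hb1
  obtain ⟨t, ht⟩ := UU_supp hb2
  rcases sq_mod8 r with h8 | h8 | h8 <;> rcases sq_mod8 s with h9 | h9 | h9 <;>
    rcases sq_mod8 t with h10 | h10 | h10 <;> omega

lemma P7_U1U4U4 (M : ℕ) : P7 (UU 1 M * (UU 4 M * UU 4 M)) := by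
  intro i hi
  by_contra h
  obtain ⟨a, b, hab, ha, hb⟩ := mul_supp h
  obtain ⟨r, hr⟩ := UU_supp ha
  obtain ⟨b1, b2, hb12, hb1, hb2⟩ := mul_supp hb
  obtain ⟨s, hs⟩ := UU_supp hb1
  obtain ⟨t, ht⟩ := UU_supp hb2
  rcases sq_mod8 r with h8 | h8 | h8 <;> rcases sq_mod8 s with h9 | h9 | h9 <;>
    rcases sq_mod8 t with h10 | h10 | h10 <;> omega

/-- even support -/
def Ev (P : ZX) : Prop := ∀ i : ℕ, i % 2 = 1 → PowerSeries.coeff i P = 0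

lemma Ev.one : Ev (1 : ZX) := by
  intro i hi
  rw [PowerSeries.coeff_one]
  simp [show i ≠ 0 by omega]

lemma Ev.add {P Q : ZX} (hP : Ev P) (hQ : Ev Q) : Ev (P + Q) := by
  intro i hi
  rw [map_add, hP i hi, hQ i hi, add_zero]

lemma Ev.mul {P Q : ZX} (hP : Ev P) (hQ : Ev Q) : Ev (P * Q) := by
  intro i hi
  rw [PowerSeries.coeff_mul]
  apply Finset.sum_eq_zero
  intro p hp
  rw [Finset.HasAntidiagonal.mem_antidiagonal] at hp
  rcases Nat.even_or_odd p.1 with he | ho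
  · have : p.2 % 2 = 1 := by rw [Nat.even_iff] at he; omega
    rw [hQ p.2 this, mul_zero]
  · rw [hP p.1 (Nat.odd_iff.mp ho), zero_mul]

lemma Ev.intCast_mul (z : ℤ) {P : ZX} (hP : Ev P) : Ev ((z:ZX) * P) := by
  intro i hi
  rw [coeff_int_mul, hP i hi, mul_zero]

lemma Ev_U2 (M : ℕ) : Ev (UU 2 M) := by
  intro i hi
  by_contra h
  obtain ⟨r, hr⟩ := UU_supp h
  omega

lemma Ev_U4 (M : ℕ) : Ev (UU 4 M) := by
  intro i hi
  by_contra h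
  obtain ⟨r, hr⟩ := UU_supp h
  omega

/-- The central mod-16 class-7 vanishing for Φ = A·B·C'. -/
lemma key_phi (M j : ℕ) (c₂ c₃ : ℤ) {a : ℕ} (ha : a % 8 = 7) :
    (16:ℤ) ∣ PowerSeries.coeff a
      ((1 + ((2*((j:ℤ)+1) : ℤ):ZX) * UU 4 M + ((4*c₂ : ℤ):ZX) * (UU 4 M)^2
          + ((8*c₃ : ℤ):ZX) * (UU 4 M)^3)
        * (1 + ((4*((j:ℤ)+1) : ℤ):ZX) * UU 2 M + ((4*((j:ℤ)+1)*(2*(j:ℤ)+3) : ℤ):ZX) * (UU 2 M)^2)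
        * (1 + ((8*(j:ℤ)+6 : ℤ):ZX) * UU 1 M + ((8*((j:ℤ)+1) : ℤ):ZX) * (UU 1 M)^2)) := by
  set u1 := UU 1 M
  set u2 := UU 2 M
  set u4 := UU 4 M
  set A : ZX := 1 + ((2*((j:ℤ)+1) : ℤ):ZX) * u4 + ((4*c₂ : ℤ):ZX) * u4^2 + ((8*c₃ : ℤ):ZX) * u4^3
    with hA
  set B : ZX := 1 + ((4*((j:ℤ)+1) : ℤ):ZX) * u2 + ((4*((j:ℤ)+1)*(2*(j:ℤ)+3) : ℤ):ZX) * u2^2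
    with hB
  -- R collects the 8-divisible junk in A*B
  set R : ZX := ((c₃ : ℤ):ZX) * u4^3
    + ((((j:ℤ)+1)^2 : ℤ):ZX) * (u2*u4) + ((2*((j:ℤ)+1)*c₂ : ℤ):ZX) * (u2*u4^2)
    + ((4*((j:ℤ)+1)*c₃ : ℤ):ZX) * (u2*u4^3)
    + ((((j:ℤ)+1)^2*(2*(j:ℤ)+3) : ℤ):ZX) * (u2^2*u4)
    + ((2*((j:ℤ)+1)*(2*(j:ℤ)+3)*c₂ : ℤ):ZX) * (u2^2*u4^2)
    + ((4*((j:ℤ)+1)*(2*(j:ℤ)+3)*c₃ : ℤ):ZX) * (u2^2*u4^3) with hR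
  have hEvR : Ev R := by
    have e2 := Ev_U2 M
    have e4 := Ev_U4 M
    have e22 : Ev (u2^2) := by rw [sq]; exact e2.mul e2
    have e42 : Ev (u4^2) := by rw [sq]; exact e4.mul e4
    have e43 : Ev (u4^3) := by rw [pow_succ]; exact e42.mul e4
    rw [hR]
    refine Ev.add (Ev.add (Ev.add (Ev.add (Ev.add (Ev.add ?_ ?_) ?_) ?_) ?_) ?_) ?_
    · exact Ev.intCast_mul _ e43
    · exact Ev.intCast_mul _ (e2.mul e4)
    · exact Ev.intCast_mul _ (e2.mul e42)
    · exact Ev.intCast_mul _ (e2.mul e43)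
    · exact Ev.intCast_mul _ (e22.mul e4)
    · exact Ev.intCast_mul _ (e22.mul e42)
    · exact Ev.intCast_mul _ (e22.mul e43)
  have hAB : A * B = 1 + ((2*((j:ℤ)+1) : ℤ):ZX) * u4 + ((4*((j:ℤ)+1) : ℤ):ZX) * u2
      + ((4*c₂ : ℤ):ZX) * u4^2 + ((4*((j:ℤ)+1)*(2*(j:ℤ)+3) : ℤ):ZX) * u2^2
      + ((8:ℤ):ZX) * R := by
    rw [hA, hB, hR]
    push_cast
    ring
  have hEvAB : Ev (A * B) := by
    have e2 := Ev_U2 M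
    have e4 := Ev_U4 M
    have e22 : Ev (u2^2) := by rw [sq]; exact e2.mul e2
    have e42 : Ev (u4^2) := by rw [sq]; exact e4.mul e4
    rw [hAB]
    refine Ev.add (Ev.add (Ev.add (Ev.add (Ev.add ?_ ?_) ?_) ?_) ?_) ?_
    · exact Ev.one
    · exact Ev.intCast_mul _ e4
    · exact Ev.intCast_mul _ e2
    · exact Ev.intCast_mul _ e42
    · exact Ev.intCast_mul _ e22
    · exact Ev.intCast_mul _ hEvR
  -- decompose the full product
  have hsplit : A * B * (1 + ((8*(j:ℤ)+6 : ℤ):ZX) * u1 + ((8*((j:ℤ)+1) : ℤ):ZX) * u1^2)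
      = A*B + ((8*(j:ℤ)+6 : ℤ):ZX) * (u1 * (A*B))
        + ((8*((j:ℤ)+1) : ℤ):ZX) * ((u1*u1) * (A*B)) := by
    push_cast
    ring
  rw [hsplit, map_add, map_add, coeff_int_mul, coeff_int_mul]
  -- term 1
  have h1 : PowerSeries.coeff a (A*B) = 0 := hEvAB a (by omega)
  -- term 2
  have h2 : (8:ℤ) ∣ PowerSeries.coeff a (u1 * (A*B)) := by
    have hexp : u1 * (A*B) = u1 + ((2*((j:ℤ)+1) : ℤ):ZX) * (u1*u4)
        + ((4*((j:ℤ)+1) : ℤ):ZX) * (u1*u2) + ((4*c₂ : ℤ):ZX) * (u1*(u4*u4))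
        + ((4*((j:ℤ)+1)*(2*(j:ℤ)+3) : ℤ):ZX) * (u1*(u2*u2)) + ((8:ℤ):ZX) * (u1*R) := by
      rw [hAB]
      push_cast
      ring
    rw [hexp]
    simp only [map_add, coeff_int_mul]
    rw [P7_U1 M a ha, P7_U1U4 M a ha, P7_U1U2 M a ha, P7_U1U4U4 M a ha, P7_U1U2U2 M a ha]
    ring_nf
    exact ⟨PowerSeries.coeff a (u1*R), by ring⟩
  -- term 3
  have h3 : (2:ℤ) ∣ PowerSeries.coeff a ((u1*u1) * (A*B)) := by
    have hSS : (u1*u1) * (A*B) = u1*u1 + ((2:ℤ):ZX) * ((u1*u1) * ((((j:ℤ)+1 : ℤ):ZX) * u4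
        + ((2*((j:ℤ)+1) : ℤ):ZX) * u2 + ((2*c₂ : ℤ):ZX) * u4^2
        + ((2*((j:ℤ)+1)*(2*(j:ℤ)+3) : ℤ):ZX) * u2^2 + ((4:ℤ):ZX) * R)) := by
      rw [hAB]
      push_cast
      ring
    rw [hSS, map_add, coeff_int_mul, P7_U1U1 M a ha, zero_add]
    exact ⟨_, rfl⟩
  obtain ⟨z2, hz2⟩ := h2
  obtain ⟨z3, hz3⟩ := h3
  rw [h1, hz2, hz3]
  exact ⟨(4*(j:ℤ)+3)*z2 + ((j:ℤ)+1)*z3, by ring⟩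

end Support

section FinalPrep
open PowerSeries

lemma Icc1_eq_Ioc0 (i : ℕ) : Finset.Icc 1 i = Finset.Ioc 0 i := by
  ext x
  simp [Finset.mem_Icc, Finset.mem_Ioc]
  omega

lemma tail_one' (i M e : ℕ) (expo : ℕ → ℕ) (h : ∀ m ∈ Finset.Ioc i M, i+1 ≤ expo m) :
    (X:ZX)^(i+1) ∣ (∏ m ∈ Finset.Ioc i M, (1 - (X:ZX)^(expo m))^e) - 1 := by
  apply dvd_sub_one_prod
  intro m hm
  have h1 : (X:ZX)^(i+1) ∣ (1 - (X:ZX)^(expo m)) - 1 := by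
    have h2 : (1 - (X:ZX)^(expo m)) - 1 = -(X^(expo m)) := by ring
    rw [h2]
    exact (pow_dvd_pow X (h m hm)).neg_right
  have h3 := dvd_cong_pow h1 e
  rwa [one_pow] at h3

lemma constCoeff_X_pow_ne (e : ℕ) (he : e ≠ 0) : PowerSeries.constantCoeff ((X:ZX)^e) = 0 := by
  rw [← PowerSeries.coeff_zero_eq_constantCoeff_apply, PowerSeries.coeff_X_pow]
  simp [Ne.symm he]

lemma constCoeff_prod_one_sub (c M : ℕ) (hc : 1 ≤ c) :
    PowerSeries.constantCoeff (∏ m ∈ Finset.Ioc 0 M, (1 - (X:ZX)^(c*m))) = 1 := by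
  rw [map_prod]
  apply Finset.prod_eq_one
  intro m hm
  rw [Finset.mem_Ioc] at hm
  rw [map_sub, map_one, constCoeff_X_pow_ne (c*m) (by have h1 := hm.1; intro hz; rcases Nat.mul_eq_zero.mp hz with h|h <;> omega)]
  ring

lemma constCoeff_UU (c M : ℕ) (hc : 1 ≤ c) : PowerSeries.constantCoeff (UU c M) = 0 := by
  rw [UU, map_sum]
  apply Finset.sum_eq_zero
  intro r hr
  rw [Finset.mem_Ioc] at hr
  rw [map_mul, constCoeff_X_pow_ne (c*r^2) (Nat.mul_ne_zero (by omega) (pow_ne_zero 2 (by omega))), mul_zero]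

lemma constCoeff_T (c M : ℕ) (hc : 1 ≤ c) : PowerSeries.constantCoeff (1 - 2 * UU c M) = 1 := by
  rw [map_sub, map_one, map_mul, constCoeff_UU c M hc, mul_zero, sub_zero]

end FinalPrep

section Phase0
open PowerSeries

lemma phase0 (dd : ℕ → ℕ → ℤ) (hd : ElongatedDiamondGF dd) (Kk M : ℕ) (hK : 1 ≤ Kk) :
    (X:ZX)^M ∣ (PowerSeries.mk fun i => dd Kk i) * (∏ m ∈ Finset.Ioc 0 M, (1 - (X:ZX)^m))^(3*Kk+1)
      - (∏ m ∈ Finset.Ioc 0 M, (1 - (X:ZX)^(2*m)))^Kk := by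
  rw [PowerSeries.X_pow_dvd_iff]
  intro i hi
  have h := hd Kk hK i
  rw [Icc1_eq_Ioc0] at h
  rw [map_sub]
  have hL : (PowerSeries.coeff i) ((PowerSeries.mk fun i => dd Kk i)
        * (∏ m ∈ Finset.Ioc 0 M, (1 - (X:ZX)^m))^(3*Kk+1))
      = (PowerSeries.coeff i) ((PowerSeries.mk fun i => dd Kk i)
        * ∏ m ∈ Finset.Ioc 0 i, (1 - (X:ZX)^m)^(3*Kk+1)) := by
    rw [← Finset.prod_pow,
      ← Finset.prod_Ioc_consecutive (fun m => (1 - (X:ZX)^m)^(3*Kk+1)) (Nat.zero_le i) hi.le,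
      ← mul_assoc]
    exact coeff_mul_tail i _ _
      (tail_one' i M (3*Kk+1) (fun m => m) (fun m hm => by rw [Finset.mem_Ioc] at hm; omega))
  have hR : (PowerSeries.coeff i) ((∏ m ∈ Finset.Ioc 0 M, (1 - (X:ZX)^(2*m)))^Kk)
      = (PowerSeries.coeff i) (∏ m ∈ Finset.Ioc 0 i, (1 - (X:ZX)^(2*m))^Kk) := by
    rw [← Finset.prod_pow,
      ← Finset.prod_Ioc_consecutive (fun m => (1 - (X:ZX)^(2*m))^Kk) (Nat.zero_le i) hi.le]
    exact coeff_mul_tail i _ _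
      (tail_one' i M Kk (fun m => 2*m) (fun m hm => by rw [Finset.mem_Ioc] at hm; omega))
  rw [hL, hR, h, sub_self]

end Phase0


section CoreIdent
variable {R : Type*} [CommRing R]

lemma core_identity (D F8 T4 F4 T2 F2 T1 A B C yA yB yC : R) (j : ℕ)
    (hyA : T4^(j+1) * A = 1 + 16*yA) (hyB : T2^(2*j+2) * B = 1 + 16*yB)
    (hyC : T1^(12*j+11) * C = 1 + 16*yC) :
    (D * (F8^(3*j+2) * T4^(3*j+2) * F4 * T2^(6*j+5) * F2 * T1^(12*j+11))
      - F8^(2*j+1) * T4^(2*j+1) * F4 * T2^(4*j+3) * F2) * (A*(B*C))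
    = (F4 * F2 * T4^(2*j+1) * T2^(4*j+3)) *
        (D * (F8^(3*j+2) * ((1+16*yA) * ((1+16*yB) * (1+16*yC)))) - F8^(2*j+1) * (A*(B*C))) := by
  rw [← hyA, ← hyB, ← hyC,
    show 3*j+2 = (2*j+1)+(j+1) by ring, show 6*j+5 = (4*j+3)+(2*j+2) by ring,
    pow_add T4, pow_add T2]
  ring

lemma fact_identity (D F8 P Φ : R) (j : ℕ) :
    D * (F8^(3*j+2) * P) - F8^(2*j+1) * Φ = F8^(2*j+1) * (D * (F8^(j+1) * P) - Φ) := by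
  rw [show 3*j+2 = (2*j+1)+(j+1) by ring, pow_add]
  ring

lemma fin2_identity (D P Φ E V8 Z XM : R)
    (hEV : E*V8 = 1) (hZ : D*(E*P) - Φ = XM * Z) : D*P - Φ*V8 = XM * (Z*V8) := by
  calc D*P - Φ*V8 = D*P*(E*V8) - Φ*V8 := by rw [hEV, mul_one]
    _ = (D*(E*P) - Φ)*V8 := by ring
    _ = XM*(Z*V8) := by rw [hZ]; ring

lemma DPi_identity (D yA yB yC : R) :
    D*((1+16*yA)*((1+16*yB)*(1+16*yC)))
      = D + ((16:ℤ):R) * (D*(yA+yB+yC) + ((16:ℤ):R)*(D*(yA*yB+yA*yC+yB*yC))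
        + ((16:ℤ):R)*(((16:ℤ):R)*(D*(yA*(yB*yC))))) := by
  push_cast
  ring

end CoreIdent

open PowerSeries

theorem stmt_11 (d : ℕ → ℕ → ℤ) (hd : ElongatedDiamondGF d) :
    ∀ n j : ℕ, (16 : ℤ) ∣ d (8 * j + 7) (8 * n + 7) := by
  classical
  intro n j
  set N' : ℕ := 8*n+7 with hN'
  set Kk : ℕ := 8*j+7 with hKkdef
  set M : ℕ := 8*n+8 with hMdef
  have hK1 : 1 ≤ Kk := by omega
  -- theta instances
  have hθ1 : (X:ZX)^M ∣ (∏ m ∈ Finset.Ioc 0 M, (1 - (X:ZX)^m))^2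
      - (∏ m ∈ Finset.Ioc 0 M, (1 - (X:ZX)^(2*m))) * (1 - 2 * UU 1 M) := by
    have h := theta_c 1 M le_rfl
    simp only [one_mul, show ∀ m : ℕ, 2*1*m = 2*m from fun m => by ring] at h
    have hu : UU 1 M = ∑ r ∈ Finset.Ioc 0 M, (-1:ZX)^(r+1) * X^(r^2) := by
      rw [UU]
      exact Finset.sum_congr rfl fun r _ => by rw [one_mul]
    rw [hu]
    exact h
  have hθ2 : (X:ZX)^M ∣ (∏ m ∈ Finset.Ioc 0 M, (1 - (X:ZX)^(2*m)))^2
      - (∏ m ∈ Finset.Ioc 0 M, (1 - (X:ZX)^(4*m))) * (1 - 2 * UU 2 M) := by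
    have h := theta_c 2 M (by norm_num)
    simp only [show ∀ m : ℕ, 2*2*m = 4*m from fun m => by ring] at h
    rw [UU]
    exact h
  have hθ4 : (X:ZX)^M ∣ (∏ m ∈ Finset.Ioc 0 M, (1 - (X:ZX)^(4*m)))^2
      - (∏ m ∈ Finset.Ioc 0 M, (1 - (X:ZX)^(8*m))) * (1 - 2 * UU 4 M) := by
    have h := theta_c 4 M (by norm_num)
    simp only [show ∀ m : ℕ, 2*4*m = 8*m from fun m => by ring] at h
    rw [UU]
    exact h
  set D : ZX := PowerSeries.mk fun i => d Kk i with hD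
  set F1 : ZX := ∏ m ∈ Finset.Ioc 0 M, (1 - (X:ZX)^m) with hF1
  set F2 : ZX := ∏ m ∈ Finset.Ioc 0 M, (1 - (X:ZX)^(2*m)) with hF2
  set F4 : ZX := ∏ m ∈ Finset.Ioc 0 M, (1 - (X:ZX)^(4*m)) with hF4
  set F8 : ZX := ∏ m ∈ Finset.Ioc 0 M, (1 - (X:ZX)^(8*m)) with hF8
  set T1 : ZX := 1 - 2 * UU 1 M with hT1
  set T2 : ZX := 1 - 2 * UU 2 M with hT2
  set T4 : ZX := 1 - 2 * UU 4 M with hT4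
  -- phase 0
  have h0 : (X:ZX)^M ∣ D * F1^(2*(12*j+11)) - F2^(8*j+7) := by
    have h := phase0 d hd Kk M hK1
    rw [← hF1, ← hF2, ← hD, show 3*Kk+1 = 2*(12*j+11) by omega, show Kk = 8*j+7 from hKkdef] at h
    exact h
  -- power congruences
  have hA : (X:ZX)^M ∣ F1^(2*(12*j+11)) - F2^(12*j+11) * T1^(12*j+11) := by
    have h := dvd_cong_pow hθ1 (12*j+11)
    rwa [← pow_mul, mul_pow] at h
  have hB : ∀ e : ℕ, (X:ZX)^M ∣ F2^(2*e+1) - F4^e * T2^e * F2 := by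
    intro e
    have h := dvd_cong_mul (dvd_cong_pow hθ2 e) (show (X:ZX)^M ∣ F2 - F2 by simp)
    rwa [← pow_mul, ← pow_succ, mul_pow] at h
  have hC : ∀ e : ℕ, (X:ZX)^M ∣ F4^(2*e+1) - F8^e * T4^e * F4 := by
    intro e
    have h := dvd_cong_mul (dvd_cong_pow hθ4 e) (show (X:ZX)^M ∣ F4 - F4 by simp)
    rwa [← pow_mul, ← pow_succ, mul_pow] at h
  -- reduce LHS
  have hW : (X:ZX)^M ∣ D * F1^(2*(12*j+11))
      - D * (F8^(3*j+2) * T4^(3*j+2) * F4 * T2^(6*j+5) * F2 * T1^(12*j+11)) := by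
    obtain ⟨zA, hzA⟩ := hA
    obtain ⟨zB, hzB⟩ := hB (6*j+5)
    obtain ⟨zC, hzC⟩ := hC (3*j+2)
    rw [show 2*(6*j+5)+1 = 12*j+11 by ring] at hzB
    rw [show 2*(3*j+2)+1 = 6*j+5 by ring] at hzC
    refine ⟨D*zA + D*T1^(12*j+11)*zB + D*T1^(12*j+11)*T2^(6*j+5)*F2*zC, ?_⟩
    linear_combination D*hzA + D*T1^(12*j+11)*hzB + D*T1^(12*j+11)*T2^(6*j+5)*F2*hzC
  -- reduce RHS
  have hV : (X:ZX)^M ∣ F2^(8*j+7) - F8^(2*j+1) * T4^(2*j+1) * F4 * T2^(4*j+3) * F2 := by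
    obtain ⟨zB, hzB⟩ := hB (4*j+3)
    obtain ⟨zC, hzC⟩ := hC (2*j+1)
    rw [show 2*(4*j+3)+1 = 8*j+7 by ring] at hzB
    rw [show 2*(2*j+1)+1 = 4*j+3 by ring] at hzC
    refine ⟨zB + T2^(4*j+3)*F2*zC, ?_⟩
    linear_combination hzB + T2^(4*j+3)*F2*hzC
  have hDWV : (X:ZX)^M ∣ D * (F8^(3*j+2) * T4^(3*j+2) * F4 * T2^(6*j+5) * F2 * T1^(12*j+11))
      - F8^(2*j+1) * T4^(2*j+1) * F4 * T2^(4*j+3) * F2 :=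
    dvd_sub_trans (dvd_sub_trans (dvd_sub_comm.mp hW) h0) hV
  -- mod 16 inverses
  obtain ⟨c₂, c₃, yA, hyA⟩ := inv16_pow1 (UU 4 M) j
  obtain ⟨yB, hyB⟩ := inv16_pow2 (UU 2 M) j
  obtain ⟨yC, hyC⟩ := inv16_pow3 (UU 1 M) j
  rw [← hT4] at hyA
  rw [← hT2] at hyB
  rw [← hT1] at hyC
  set A : ZX := 1 + ((2*((j:ℤ)+1) : ℤ):ZX) * UU 4 M + ((4*c₂ : ℤ):ZX) * (UU 4 M)^2
    + ((8*c₃ : ℤ):ZX) * (UU 4 M)^3 with hAdef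
  set B : ZX := 1 + ((4*((j:ℤ)+1) : ℤ):ZX) * UU 2 M
    + ((4*((j:ℤ)+1)*(2*(j:ℤ)+3) : ℤ):ZX) * (UU 2 M)^2 with hBdef
  set C : ZX := 1 + ((8*(j:ℤ)+6 : ℤ):ZX) * UU 1 M + ((8*((j:ℤ)+1) : ℤ):ZX) * (UU 1 M)^2 with hCdef
  have heq := core_identity D F8 T4 F4 T2 F2 T1 A B C yA yB yC j hyA hyB hyC
  have hcore : (X:ZX)^M ∣ (F4 * F2 * T4^(2*j+1) * T2^(4*j+3)) *
      (D * (F8^(3*j+2) * ((1+16*yA) * ((1+16*yB) * (1+16*yC)))) - F8^(2*j+1) * (A*(B*C))) := by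
    rw [← heq]
    exact hDWV.mul_right _
  -- cancel units
  have hcF2 : PowerSeries.constantCoeff F2 = 1 := by
    rw [hF2]; exact constCoeff_prod_one_sub 2 M (by norm_num)
  have hcF4 : PowerSeries.constantCoeff F4 = 1 := by
    rw [hF4]; exact constCoeff_prod_one_sub 4 M (by norm_num)
  have hcF8 : PowerSeries.constantCoeff F8 = 1 := by
    rw [hF8]; exact constCoeff_prod_one_sub 8 M (by norm_num)
  have hcT2 : PowerSeries.constantCoeff T2 = 1 := by
    rw [hT2]; exact constCoeff_T 2 M (by norm_num)
  have hcT4 : PowerSeries.constantCoeff T4 = 1 := by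
    rw [hT4]; exact constCoeff_T 4 M (by norm_num)
  have hΘ0 : PowerSeries.constantCoeff (F4 * F2 * T4^(2*j+1) * T2^(4*j+3)) ≠ 0 := by
    rw [map_mul, map_mul, map_mul, map_pow, map_pow, hcF4, hcF2, hcT4, hcT2]
    norm_num
  have hcore2 := dvd_cancel_left _ hΘ0 M _ hcore
  rw [fact_identity D F8 ((1+16*yA) * ((1+16*yB) * (1+16*yC))) (A*(B*C)) j] at hcore2
  have hfin := dvd_cancel_left (F8^(2*j+1)) (by rw [map_pow, hcF8, one_pow]; norm_num) M _ hcore2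
  -- invert F8^(j+1)
  have hE0 : PowerSeries.constantCoeff (F8^(j+1)) = 1 := by rw [map_pow, hcF8, one_pow]
  set V8 : ZX := PowerSeries.invOfUnit (F8^(j+1)) 1 with hV8
  have hEV : F8^(j+1) * V8 = 1 := PowerSeries.mul_invOfUnit (F8^(j+1)) 1 (by rw [hE0]; rfl)
  obtain ⟨Z, hZ⟩ := hfin
  have hfin2 : D * ((1+16*yA) * ((1+16*yB) * (1+16*yC))) - (A*(B*C))*V8 = (X:ZX)^M * (Z*V8) :=
    fin2_identity D _ _ _ V8 Z ((X:ZX)^M) hEV hZ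
  have hc0 : PowerSeries.coeff N' ((X:ZX)^M * (Z*V8)) = 0 :=
    PowerSeries.X_pow_dvd_iff.mp ⟨Z*V8, rfl⟩ N' (by omega)
  have hce : PowerSeries.coeff N' (D * ((1+16*yA) * ((1+16*yB) * (1+16*yC))))
      = PowerSeries.coeff N' ((A*(B*C))*V8) := by
    have h2 := congrArg (PowerSeries.coeff N') hfin2
    rw [map_sub, hc0] at h2
    exact sub_eq_zero.mp h2
  have hcoeffD : PowerSeries.coeff N' (D * ((1+16*yA) * ((1+16*yB) * (1+16*yC))))
      = d Kk N' + 16 * PowerSeries.coeff N' (D*(yA+yB+yC)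
        + ((16:ℤ):ZX)*(D*(yA*yB+yA*yC+yB*yC)) + ((16:ℤ):ZX)*(((16:ℤ):ZX)*(D*(yA*(yB*yC))))) := by
    rw [DPi_identity D yA yB yC, map_add, coeff_int_mul, hD, PowerSeries.coeff_mk]
  -- 16 divides coeff of Φ*V8
  have h16 : (16:ℤ) ∣ PowerSeries.coeff N' ((A*(B*C))*V8) := by
    have hSupE : Sup8 (F8^(j+1)) := by
      refine Sup8.pow ?_ (j+1)
      rw [hF8]
      exact Sup8_F8 M
    have hSupV := Sup8_invOfUnit hSupE hE0 V8 hEV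
    rw [PowerSeries.coeff_mul]
    apply Finset.dvd_sum
    intro p hp
    rw [Finset.HasAntidiagonal.mem_antidiagonal] at hp
    by_cases h8 : 8 ∣ p.2
    · have hcls : p.1 % 8 = 7 := by omega
      have hkp := key_phi M j c₂ c₃ hcls
      rw [← hAdef, ← hBdef, ← hCdef] at hkp
      have hassoc : A * B * C = A * (B * C) := by rw [mul_assoc]
      rw [hassoc] at hkp
      exact hkp.mul_right _
    · rw [hSupV p.2 h8, mul_zero]
      exact dvd_zero _
  -- conclude
  obtain ⟨w, hw⟩ := h16
  rw [hcoeffD, hw] at hce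
  exact ⟨w - PowerSeries.coeff N' (D*(yA+yB+yC)
    + ((16:ℤ):ZX)*(D*(yA*yB+yA*yC+yB*yC)) + ((16:ℤ):ZX)*(((16:ℤ):ZX)*(D*(yA*(yB*yC))))),
    by linarith⟩
end

section
/- For all integers n ≥ 0 and j ≥ 0, d_{16j+15}(4n + 3) ≡ 0 (mod 16). -/
open PowerSeries Finset

section Truncation

variable {R : Type*} [CommRing R]

theorem smodEq_X_pow_iff {c : ℕ} {f g : R⟦X⟧} :
    f ≡ g [SMOD Ideal.span {(X : R⟦X⟧) ^ c}] ↔ ∀ i < c, coeff i f = coeff i g := by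
  simp only [SModEq.sub_mem, Ideal.mem_span_singleton, X_pow_dvd_iff, map_sub, sub_eq_zero]

theorem one_sub_X_pow_smodEq_one {a c : ℕ} (h : c ≤ a) :
    (1 - X ^ a : R⟦X⟧) ≡ 1 [SMOD Ideal.span {(X : R⟦X⟧) ^ c}] := by
  rw [SModEq.sub_mem, sub_sub_cancel_left, neg_mem_iff, Ideal.mem_span_singleton]
  exact pow_dvd_pow X h

theorem expand_smodEq {a c : ℕ} (ha : a ≠ 0) {f g : R⟦X⟧}
    (h : f ≡ g [SMOD Ideal.span {(X : R⟦X⟧) ^ c}]) :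
    expand a ha f ≡ expand a ha g [SMOD Ideal.span {(X : R⟦X⟧) ^ (a * c)}] := by
  rw [SModEq.sub_mem, Ideal.mem_span_singleton] at h ⊢
  simpa [pow_mul] using map_dvd (expand a ha) h

theorem prod_smodEq_prod_of_subset {S ι : Type*} [CommRing S] {I : Ideal S} {s t : Finset ι}
    {f : ι → S} (hst : s ⊆ t) (h : ∀ i ∈ t, i ∉ s → f i ≡ 1 [SMOD I]) :
    ∏ i ∈ t, f i ≡ ∏ i ∈ s, f i [SMOD I] := by
  classical
  rw [← prod_sdiff hst]
  have hrest : ∏ i ∈ t \ s, f i ≡ ∏ i ∈ t \ s, (1 : S) [SMOD I] :=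
    SModEq.prod fun i hi => h i (mem_sdiff.1 hi).1 (mem_sdiff.1 hi).2
  simpa using hrest.mul (SModEq.refl (∏ i ∈ s, f i))

end Truncation

section QPochhammer

variable (R : Type*) [CommRing R]

noncomputable def qPochhammer (n : ℕ) : R⟦X⟧ := ∏ m ∈ Icc 1 n, (1 - X ^ m)

variable {R}

theorem qPochhammer_zero : qPochhammer R 0 = 1 := by simp [qPochhammer]

theorem qPochhammer_succ (n : ℕ) : qPochhammer R (n + 1) = qPochhammer R n * (1 - X ^ (n + 1)) :=
  prod_Icc_succ_top (by omega) _

theorem qPochhammer_mul_prod_Ioc {m n : ℕ} (h : m ≤ n) :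
    qPochhammer R m * ∏ i ∈ Ioc m n, (1 - X ^ i) = qPochhammer R n := by
  have hIcc (k : ℕ) : Icc 1 k = Ioc 0 k := Icc_add_one_left_eq_Ioc 0 k
  simp only [qPochhammer, hIcc]
  exact prod_Ioc_consecutive _ (Nat.zero_le m) h

theorem isUnit_qPochhammer (n : ℕ) : IsUnit (qPochhammer R n) := by
  rw [isUnit_iff_constantCoeff, qPochhammer, map_prod, prod_eq_one fun m hm => ?_]
  · exact isUnit_one
  · simp [zero_pow (by simp at hm; omega : m ≠ 0)]

theorem qPochhammer_smodEq {n N : ℕ} (h : n ≤ N) :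
    qPochhammer R N ≡ qPochhammer R n [SMOD Ideal.span {(X : R⟦X⟧) ^ (n + 1)}] :=
  prod_smodEq_prod_of_subset (Icc_subset_Icc_right h) fun m hm hmn =>
    one_sub_X_pow_smodEq_one (by simp only [mem_Icc] at hm hmn; omega)

theorem expand_qPochhammer (a : ℕ) (ha : a ≠ 0) (n : ℕ) :
    expand a ha (qPochhammer R n) = ∏ m ∈ Icc 1 n, (1 - X ^ (a * m)) := by
  simp [qPochhammer, map_prod, pow_mul]

theorem expand_qPochhammer_succ (a : ℕ) (ha : a ≠ 0) (n : ℕ) :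
    expand a ha (qPochhammer R (n + 1)) =
      expand a ha (qPochhammer R n) * (1 - X ^ (a * (n + 1))) := by
  simp [qPochhammer_succ, pow_mul]

@[simp]
theorem map_qPochhammer {S : Type*} [CommRing S] (f : R →+* S) (n : ℕ) :
    map f (qPochhammer R n) = qPochhammer S n := by
  simp [qPochhammer, map_prod]

theorem two_dvd_qPochhammer_sq_sub_expand (n : ℕ) :
    (2 : R⟦X⟧) ∣ qPochhammer R n ^ 2 - expand 2 two_ne_zero (qPochhammer R n) := by
  have hfactor (m : ℕ) :
      (1 - X ^ m : R⟦X⟧) ^ 2 ≡ 1 - X ^ (2 * m) [SMOD Ideal.span {(2 : R⟦X⟧)}] := by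
    rw [SModEq.sub_mem, Ideal.mem_span_singleton]
    exact ⟨X ^ (2 * m) - X ^ m, by ring⟩
  have := SModEq.prod (s := Icc 1 n) fun m _ => hfactor m
  rwa [prod_pow, SModEq.sub_mem, Ideal.mem_span_singleton, ← expand_qPochhammer] at this

end QPochhammer

section QBinom

variable (R : Type*) [CommRing R]

noncomputable def qBinom : ℕ → ℕ → R⟦X⟧
  | _, 0 => 1
  | 0, _ + 1 => 0
  | n + 1, k + 1 => qBinom n k + X ^ (k + 1) * qBinom n (k + 1)

variable {R}

@[simp]
theorem qBinom_zero_right (n : ℕ) : qBinom R n 0 = 1 := by cases n <;> rfl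

theorem qBinom_succ_succ (n k : ℕ) :
    qBinom R (n + 1) (k + 1) = qBinom R n k + X ^ (k + 1) * qBinom R n (k + 1) := rfl

theorem qBinom_eq_zero_of_lt {n k : ℕ} (h : n < k) : qBinom R n k = 0 := by
  induction n generalizing k with
  | zero => obtain ⟨k, rfl⟩ := Nat.exists_eq_add_one.2 h; rfl
  | succ n ih =>
    obtain ⟨k, rfl⟩ := Nat.exists_eq_add_one.2 (Nat.zero_lt_of_lt h)
    rw [qBinom_succ_succ, ih (by omega), ih (by omega), mul_zero, add_zero]

@[simp]
theorem qBinom_self (n : ℕ) : qBinom R n n = 1 := by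
  induction n with
  | zero => rfl
  | succ n ih => rw [qBinom_succ_succ, ih, qBinom_eq_zero_of_lt (by omega), mul_zero, add_zero]

theorem qBinom_mul_qPochhammer_mul_qPochhammer {n k : ℕ} (h : k ≤ n) :
    qBinom R n k * qPochhammer R k * qPochhammer R (n - k) = qPochhammer R n := by
  induction n generalizing k with
  | zero =>
    obtain rfl : k = 0 := by omega
    simp [qPochhammer_zero]
  | succ n ih =>
    rcases k with _ | k
    · simp [qPochhammer_zero]
    rcases (Nat.lt_or_eq_of_le h) with h | h
    · obtain ⟨a, rfl⟩ : ∃ a, n = k + 1 + a := ⟨n - (k + 1), by omega⟩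
      have ih₁ := ih (k := k) (by omega)
      have ih₂ := ih (k := k + 1) (by omega)
      rw [show k + 1 + a - k = a + 1 by omega, qPochhammer_succ a] at ih₁
      rw [show k + 1 + a - (k + 1) = a by omega, qPochhammer_succ k] at ih₂
      rw [show k + 1 + a + 1 - (k + 1) = a + 1 by omega, qBinom_succ_succ,
        qPochhammer_succ (k + 1 + a), qPochhammer_succ a, qPochhammer_succ k]
      linear_combination (1 - X ^ (k + 1)) * ih₁ + X ^ (k + 1) * (1 - X ^ (a + 1)) * ih₂
    · obtain rfl : k = n := by omega
      simp [qPochhammer_zero]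

theorem qBinom_succ_succ' {n k : ℕ} (h : k ≤ n) :
    qBinom R (n + 1) (k + 1) = X ^ (n - k) * qBinom R n k + qBinom R n (k + 1) := by
  have hunit := (isUnit_qPochhammer (R := R) (k + 1)).mul (isUnit_qPochhammer (n - k))
  refine hunit.mul_right_cancel ?_
  have hk : qBinom R n k * qPochhammer R k * qPochhammer R (n - k) = qPochhammer R n :=
    qBinom_mul_qPochhammer_mul_qPochhammer h
  have hk₁ : qBinom R n (k + 1) * (qPochhammer R (k + 1) * qPochhammer R (n - k)) =
      (1 - X ^ (n - k)) * qPochhammer R n := by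
    rcases (Nat.lt_or_eq_of_le h) with h | rfl
    · rw [← qBinom_mul_qPochhammer_mul_qPochhammer (R := R) (show k + 1 ≤ n by omega),
        show n - k = n - (k + 1) + 1 by omega, qPochhammer_succ (n - (k + 1))]
      ring
    · simp [qBinom_eq_zero_of_lt]
  have hsucc := qBinom_mul_qPochhammer_mul_qPochhammer (R := R) (show k + 1 ≤ n + 1 by omega)
  rw [show n + 1 - (k + 1) = n - k by omega, qPochhammer_succ k, qPochhammer_succ n] at hsucc
  rw [qPochhammer_succ k] at hk₁ ⊢
  have hX : (X : R⟦X⟧) ^ (n - k) * X ^ (k + 1) = X ^ (n + 1) := by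
    rw [← pow_add]; congr 1; omega
  linear_combination hsucc - X ^ (n - k) * (1 - X ^ (k + 1)) * hk - hk₁ + qPochhammer R n * hX

theorem mul_qPochhammer_smodEq_one {G : R⟦X⟧} {a b M : ℕ}
    (hG : G * qPochhammer R a * qPochhammer R b = qPochhammer R (a + b)) (ha : a ≤ M)
    (hb : M ≤ b) :
    G * qPochhammer R M ≡ 1 [SMOD Ideal.span {(X : R⟦X⟧) ^ (a + 1)}] := by
  have hprod (s : Finset ℕ) (hs : ∀ i ∈ s, a < i) :
      ∏ i ∈ s, (1 - X ^ i : R⟦X⟧) ≡ 1 [SMOD Ideal.span {(X : R⟦X⟧) ^ (a + 1)}] := by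
    simpa using SModEq.prod (s := s) fun i hi => one_sub_X_pow_smodEq_one (R := R) (hs i hi)
  have key : G * qPochhammer R M * ∏ i ∈ Ioc M b, (1 - X ^ i) =
      ∏ i ∈ Ioc a (a + b), (1 - X ^ i) := by
    refine (isUnit_qPochhammer a).mul_left_cancel ?_
    rw [qPochhammer_mul_prod_Ioc (by omega), ← hG, ← qPochhammer_mul_prod_Ioc hb]
    ring
  have hM : G * qPochhammer R M ≡ G * qPochhammer R M * ∏ i ∈ Ioc M b, (1 - X ^ i)
      [SMOD Ideal.span {(X : R⟦X⟧) ^ (a + 1)}] := by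
    simpa using (SModEq.refl (G * qPochhammer R M)).mul
      (hprod _ fun i hi => by simp only [mem_Ioc] at hi; omega).symm
  exact hM.trans (key ▸ hprod _ fun i hi => by simp only [mem_Ioc] at hi; omega)

theorem qBinom_two_mul_mul_qPochhammer_smodEq_one {M i : ℕ} (hi : i ≤ 2 * M) :
    qBinom R (2 * M) i * qPochhammer R M ≡ 1
      [SMOD Ideal.span {(X : R⟦X⟧) ^ (M - ((M : ℤ) - i).natAbs + 1)}] := by
  have hG := qBinom_mul_qPochhammer_mul_qPochhammer (R := R) hi
  rcases le_total i M with h | h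
  · rw [show M - ((M : ℤ) - i).natAbs = i by omega]
    refine mul_qPochhammer_smodEq_one (b := 2 * M - i) ?_ h (by omega)
    rwa [show i + (2 * M - i) = 2 * M by omega]
  · rw [show M - ((M : ℤ) - i).natAbs = 2 * M - i by omega]
    refine mul_qPochhammer_smodEq_one (b := i) ?_ (by omega) h
    rw [show 2 * M - i + i = 2 * M by omega, ← hG]
    ring

end QBinom

section Theta

variable (R : Type*) [CommRing R]

local notation "σ" => expand 2 two_ne_zero

/-- `∑_{|m| ≤ M} (-1)^(M+m) q^(m²) [2M, M+m]_{q²}`, a finite form of Jacobi's triple product: it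
equals `(-1)^M ∏_{i ≤ M} (1 - q^(2i-1))²` (see `qPochhammer_two_mul_sq`) and tends to Gauss's
`∑_{m ∈ ℤ} (-1)^m q^(m²)` as `M → ∞`. -/
noncomputable def thetaPartial (M : ℕ) : R⟦X⟧ :=
  ∑ i ∈ range (2 * M + 1), (-1) ^ i * X ^ (((M : ℤ) - i).natAbs ^ 2) * σ (qBinom R (2 * M) i)

variable {R}

theorem expand_qBinom_succ_succ (n k : ℕ) :
    σ (qBinom R (n + 1) (k + 1)) =
      σ (qBinom R n k) + X ^ (2 * (k + 1)) * σ (qBinom R n (k + 1)) := by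
  simp [qBinom_succ_succ, pow_mul]

theorem expand_qBinom_succ_succ' {n k : ℕ} (h : k ≤ n) :
    σ (qBinom R (n + 1) (k + 1)) =
      X ^ (2 * (n - k)) * σ (qBinom R n k) + σ (qBinom R n (k + 1)) := by
  simp [qBinom_succ_succ' h, pow_mul]

theorem sum_mul_expand_qBinom_succ (n : ℕ) (a : ℕ → R⟦X⟧) :
    ∑ i ∈ range (n + 2), a i * σ (qBinom R (n + 1) i) =
      ∑ i ∈ range (n + 1), (a (i + 1) + X ^ (2 * i) * a i) * σ (qBinom R n i) := by
  have hshift := sum_range_succ' (fun i => X ^ (2 * i) * a i * σ (qBinom R n i)) (n + 1)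
  have htop := sum_range_succ (fun i => X ^ (2 * i) * a i * σ (qBinom R n i)) (n + 1)
  simp only [qBinom_eq_zero_of_lt (lt_add_one n), map_zero, mul_zero, add_zero] at htop
  simp only [qBinom_zero_right, map_one, mul_zero, pow_zero, one_mul, mul_one] at hshift
  have hl (i : ℕ) : a (i + 1) * σ (qBinom R (n + 1) (i + 1)) =
      a (i + 1) * σ (qBinom R n i) + X ^ (2 * (i + 1)) * a (i + 1) * σ (qBinom R n (i + 1)) := by
    rw [expand_qBinom_succ_succ]; ring
  have hr (i : ℕ) : (a (i + 1) + X ^ (2 * i) * a i) * σ (qBinom R n i) =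
      a (i + 1) * σ (qBinom R n i) + X ^ (2 * i) * a i * σ (qBinom R n i) := by ring
  rw [sum_range_succ', sum_congr rfl fun i _ => hl i, sum_congr rfl fun i _ => hr i,
    sum_add_distrib, sum_add_distrib, qBinom_zero_right, map_one, mul_one]
  linear_combination htop - hshift

theorem sum_mul_expand_qBinom_succ' (n : ℕ) (b : ℕ → R⟦X⟧) :
    ∑ i ∈ range (n + 2), b i * σ (qBinom R (n + 1) i) =
      ∑ i ∈ range (n + 1), (b i + X ^ (2 * (n - i)) * b (i + 1)) * σ (qBinom R n i) := by
  have hshift := sum_range_succ' (fun i => b i * σ (qBinom R n i)) (n + 1)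
  have htop := sum_range_succ (fun i => b i * σ (qBinom R n i)) (n + 1)
  simp only [qBinom_eq_zero_of_lt (lt_add_one n), map_zero, mul_zero, add_zero] at htop
  simp only [qBinom_zero_right, map_one, mul_one] at hshift
  have hl (i : ℕ) (hi : i ∈ range (n + 1)) : b (i + 1) * σ (qBinom R (n + 1) (i + 1)) =
      X ^ (2 * (n - i)) * b (i + 1) * σ (qBinom R n i) + b (i + 1) * σ (qBinom R n (i + 1)) := by
    rw [expand_qBinom_succ_succ' (Nat.lt_succ_iff.1 (mem_range.1 hi))]; ring
  have hr (i : ℕ) : (b i + X ^ (2 * (n - i)) * b (i + 1)) * σ (qBinom R n i) =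
      X ^ (2 * (n - i)) * b (i + 1) * σ (qBinom R n i) + b i * σ (qBinom R n i) := by ring
  rw [sum_range_succ', sum_congr rfl hl, sum_congr rfl fun i _ => hr i, sum_add_distrib,
    sum_add_distrib, qBinom_zero_right, map_one, mul_one]
  linear_combination htop - hshift

theorem thetaPartial_succ (M : ℕ) :
    thetaPartial R (M + 1) = -(1 - X ^ (2 * M + 1)) ^ 2 * thetaPartial R M := by
  set a : ℕ → R⟦X⟧ := fun i => (-1) ^ i * X ^ ((((M + 1 : ℕ) : ℤ) - i).natAbs ^ 2)
  have hsplit := (sum_mul_expand_qBinom_succ (2 * M + 1) a).trans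
    (sum_mul_expand_qBinom_succ' (2 * M) fun i => a (i + 1) + X ^ (2 * i) * a i)
  change ∑ i ∈ range (2 * M + 1 + 2), a i * σ (qBinom R (2 * M + 1 + 1) i) = _
  -- both q-Pascal rules bring `[2M+2, i]` down to `[2M, u]`; then compare the coefficients of each
  rw [hsplit, thetaPartial, mul_sum]
  refine sum_congr rfl fun u hu => ?_
  have hu : u ≤ 2 * M := Nat.lt_succ_iff.1 (mem_range.1 hu)
  set e := (((M : ℤ) - u).natAbs ^ 2)
  have hexp {x y : ℕ} (h : (x : ℤ) = y) : (X : R⟦X⟧) ^ x = X ^ y := by rw [Nat.cast_inj.1 h]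
  have h₁ : (X : R⟦X⟧) ^ (2 * u) * X ^ ((((M + 1 : ℕ) : ℤ) - u).natAbs ^ 2) =
      X ^ e * X ^ (2 * M + 1) := by
    simp only [← pow_add]; apply hexp; push_cast [e, sq_abs]; ring
  have h₂ : (X : R⟦X⟧) ^ ((((M + 1 : ℕ) : ℤ) - ((u + 1 : ℕ) : ℤ)).natAbs ^ 2) =
      X ^ e := by
    apply hexp; push_cast [e, sq_abs]; ring
  have h₃ : (X : R⟦X⟧) ^ (2 * (2 * M - u)) *
      X ^ ((((M + 1 : ℕ) : ℤ) - ((u + 1 + 1 : ℕ) : ℤ)).natAbs ^ 2) =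
      X ^ e * X ^ (2 * M + 1) := by
    simp only [← pow_add]; apply hexp; push_cast [e, sq_abs, hu]; ring
  have h₄ : (X : R⟦X⟧) ^ (2 * (2 * M - u)) * (X ^ (2 * (u + 1)) *
      X ^ ((((M + 1 : ℕ) : ℤ) - ((u + 1 : ℕ) : ℤ)).natAbs ^ 2)) =
      X ^ e * (X ^ (2 * M + 1)) ^ 2 := by
    simp only [← pow_add, ← pow_mul]; apply hexp; push_cast [e, sq_abs, hu]; ring
  simp only [a]
  linear_combination ((-1 : R⟦X⟧) ^ u * σ (qBinom R (2 * M) u)) * (h₃ + h₁ - h₄ - h₂)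

theorem qPochhammer_two_mul_sq (M : ℕ) :
    qPochhammer R (2 * M) ^ 2 = (-1) ^ M * thetaPartial R M * σ (qPochhammer R M) ^ 2 := by
  induction M with
  | zero => simp [thetaPartial, qPochhammer_zero]
  | succ M ih =>
    rw [show 2 * (M + 1) = 2 * M + 1 + 1 by ring, qPochhammer_succ, qPochhammer_succ,
      thetaPartial_succ, expand_qPochhammer_succ, mul_pow, mul_pow, ih]
    ring

theorem coeff_thetaPartial_mul_expand_qPochhammer {M p : ℕ} (hp : p ≤ M) (hsq : ¬IsSquare p) :
    coeff p (thetaPartial R M * σ (qPochhammer R M)) = 0 := by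
  rw [thetaPartial, sum_mul, map_sum]
  refine sum_eq_zero fun i hi => ?_
  have hi : i ≤ 2 * M := Nat.lt_succ_iff.1 (mem_range.1 hi)
  set m := ((M : ℤ) - i).natAbs
  have hcong := expand_smodEq two_ne_zero (qBinom_two_mul_mul_qPochhammer_smodEq_one (R := R) hi)
  rw [map_one] at hcong
  have hterm : (-1) ^ i * X ^ (m ^ 2) * σ (qBinom R (2 * M) i) * σ (qPochhammer R M) =
      C ((-1) ^ i) * (X ^ (m ^ 2) * σ (qBinom R (2 * M) i * qPochhammer R M)) := by
    simp only [map_mul, map_pow, map_neg, map_one]; ring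
  rw [hterm, coeff_C_mul, coeff_X_pow_mul']
  -- the summand is `± q^(m²) (1 + O(q^(2(M-m)+2)))`, and `m² + 2(M-m) + 2 > M`
  split_ifs with hle
  · have hne : p ≠ m ^ 2 := fun h => hsq ⟨m, by rw [h, sq]⟩
    have hm := two_mul_le_add_sq m 1
    rw [smodEq_X_pow_iff.1 hcong (p - m ^ 2) (by omega), coeff_one, if_neg (by omega), mul_zero]
  · rw [mul_zero]

end Theta

section SixteenAlgebra

variable {S : Type*} [CommRing S]

theorem pow_eight_eq_of_two_dvd_sub (h16 : (16 : S) = 0) {u v : S} (h : (2 : S) ∣ u - v) :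
    u ^ 8 = v ^ 8 := by
  have := dvd_sub_pow_of_dvd_sub (p := 2) (by exact_mod_cast h) 3
  norm_num at this
  rwa [h16, zero_dvd_iff, sub_eq_zero] at this

theorem pow_inv_eq_of_pow_eq {x x' u u' : S} (hx : x * x' = 1) (hu : u * u' = 1) {n m : ℕ}
    (h : x ^ n = u ^ m) : x' ^ n = u' ^ m :=
  calc x' ^ n = x' ^ n * (u * u') ^ m := by rw [hu, one_pow, mul_one]
    _ = x' ^ n * x ^ n * u' ^ m := by rw [mul_pow, h]; ring
    _ = u' ^ m := by rw [← mul_pow, mul_comm x', hx, one_pow, one_mul]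

theorem one_sub_eight_mul_pow (h64 : (64 : S) = 0) (z : S) (n : ℕ) :
    (1 - 8 * z) ^ n = 1 - 8 * n * z := by
  induction n with
  | zero => simp
  | succ n ih =>
    rw [pow_succ, ih]
    push_cast
    linear_combination n * z ^ 2 * h64

/-- With `a = f₁` and `σ` the substitution `q ↦ q²`, this reduces `f₂^k / f₁^(3k+1)` to
`(f₁² / f₂) · f₄^(-4(j+1))` modulo series in `q²`. -/
theorem exists_pow_mul_inv_pow_eq_sub_map {F : Type*} [FunLike F S S] [RingHomClass F S S]
    (h16 : (16 : S) = 0) (σ : F) {a a' : S} (ha : a * a' = 1)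
    (hmod : (2 : S) ∣ a ^ 2 - σ a) (j : ℕ) :
    ∃ y, σ a ^ (16 * j + 15) * a' ^ (3 * (16 * j + 15) + 1) =
      a ^ 2 * σ a' * σ (σ a') ^ (4 * (j + 1)) - σ y := by
  obtain ⟨x, hx⟩ := hmod
  set b := σ a
  set b' := σ a'
  set c' := σ b'
  have hb : b * b' = 1 := by rw [← map_mul, ha, map_one]
  have hc : σ b * c' = 1 := by rw [← map_mul, hb, map_one]
  have h64 : (64 : S) = 0 := by linear_combination 4 * h16
  have ha16 : a ^ 16 = b ^ 8 := by
    rw [show a ^ 16 = (a ^ 2) ^ 8 by ring]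
    exact pow_eight_eq_of_two_dvd_sub h16 ⟨x, hx⟩
  set W := x * (b ^ 3 + 3 * b ^ 2 * x + 4 * b * x ^ 2 + 2 * x ^ 3)
  have hb8 : b ^ 8 = σ b ^ 4 + 8 * σ W := by
    have ha8 : a ^ 8 = b ^ 4 + 8 * W := by
      rw [show a ^ 8 = (a ^ 2) ^ 4 by ring, sub_eq_iff_eq_add.1 hx]; ring
    simpa [map_ofNat] using congrArg σ ha8
  set z := c' ^ 4 * σ W
  -- `(1 + 8z)(1 - 8z) = 1` as `64 = 0`
  have hb'8 : b' ^ 8 = c' ^ 4 * (1 - 8 * z) := by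
    have hc4 : (σ b * c') ^ 4 = 1 := by rw [hc, one_pow]
    have hb8' : (b * b') ^ 8 = 1 := by rw [hb, one_pow]
    linear_combination (-b' ^ 8 * c' ^ 4 * (1 - 8 * z)) * hb8 - b' ^ 8 * (1 - 8 * z) * hc4 +
      b' ^ 8 * z ^ 2 * h64 + c' ^ 4 * (1 - 8 * z) * hb8'
  have hpow : b ^ 16 * a' ^ 48 = b' ^ 8 := by
    have hb16 : (b * b') ^ 16 = 1 := by rw [hb, one_pow]
    rw [show a' ^ 48 = (a' ^ 16) ^ 3 by ring, pow_inv_eq_of_pow_eq ha hb ha16]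
    linear_combination b' ^ 8 * hb16
  refine ⟨8 * (j + 1) * b' ^ (4 * (j + 1) + 4) * W, ?_⟩
  calc b ^ (16 * j + 15) * a' ^ (3 * (16 * j + 15) + 1)
      = b ^ (16 * j + 15) * a' ^ (3 * (16 * j + 15) + 1) * ((a * a') ^ 2 * (b * b')) := by
        rw [ha, hb]; ring
    _ = a ^ 2 * b' * (b ^ 16 * a' ^ 48) ^ (j + 1) := by ring
    _ = a ^ 2 * b' * c' ^ (4 * (j + 1)) * (1 - 8 * (j + 1 : ℕ) * z) := by
        rw [hpow, hb'8, mul_pow, ← pow_mul, one_sub_eight_mul_pow h64]; ring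
    _ = a ^ 2 * b' * c' ^ (4 * (j + 1)) - σ (8 * (j + 1) * b' ^ (4 * (j + 1) + 4) * W) := by
        -- `8 a² b' = 8 b b' + 16 x b' = 8`
        simp only [map_mul, map_pow, map_add, map_one, map_natCast, map_ofNat]
        push_cast
        set t := (j + 1 : S) * c' ^ (4 * (j + 1) + 4) * σ W
        linear_combination -8 * t * b' * hx - 8 * t * hb - t * x * b' * h16

end SixteenAlgebra

section Congruence

variable {R : Type*} [CommRing R]

local notation "σ" => expand 2 two_ne_zero

theorem not_isSquare_of_mod_four_eq_three {p : ℕ} (hp : p % 4 = 3) : ¬IsSquare p := by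
  rintro ⟨r, rfl⟩
  rcases Nat.even_or_odd r with ⟨t, rfl⟩ | ⟨t, rfl⟩ <;> ring_nf at hp <;> omega

theorem coeff_mul_expand_eq_zero {c n : ℕ} (hc : c ≠ 0) {φ : R⟦X⟧}
    (hφ : ∀ i ≤ n, i % c = n % c → coeff i φ = 0) (G : R⟦X⟧) :
    coeff n (φ * expand c hc G) = 0 := by
  rw [coeff_mul]
  refine sum_eq_zero fun ⟨i, l⟩ hil => ?_
  rw [HasAntidiagonal.mem_antidiagonal] at hil
  dsimp only
  by_cases hl : c ∣ l
  · obtain ⟨t, rfl⟩ := hl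
    rw [hφ i (by omega) (by rw [← hil, Nat.add_mul_mod_self_left]), zero_mul]
  · rw [coeff_expand_of_not_dvd c hc G hl, mul_zero]

theorem coeff_qPochhammer_sq_mul_eq_zero {N p : ℕ} {v : R⟦X⟧}
    (hv : σ (qPochhammer R N) * v = 1) (hp : p ≤ N) (hsq : ¬IsSquare p) :
    coeff p (qPochhammer R N ^ 2 * v) = 0 := by
  have hcong : qPochhammer R N ^ 2 * v ≡ qPochhammer R (2 * N) ^ 2 * v
      [SMOD Ideal.span {(X : R⟦X⟧) ^ (N + 1)}] :=
    ((qPochhammer_smodEq (R := R) (show N ≤ 2 * N by omega)).symm.pow 2).mul (SModEq.refl v)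
  have htheta : qPochhammer R (2 * N) ^ 2 * v =
      C ((-1) ^ N) * (thetaPartial R N * σ (qPochhammer R N)) := by
    rw [qPochhammer_two_mul_sq]
    simp only [map_pow, map_neg, map_one]
    linear_combination (-1) ^ N * thetaPartial R N * σ (qPochhammer R N) * hv
  rw [smodEq_X_pow_iff.1 hcong p (by omega), htheta, coeff_C_mul,
    coeff_thetaPartial_mul_expand_qPochhammer hp hsq, mul_zero]

theorem mul_qPochhammer_pow_smodEq {D : R⟦X⟧} {e k : ℕ}
    (h : ∀ i, coeff i (D * qPochhammer R i ^ e) = coeff i (σ (qPochhammer R i) ^ k)) (N : ℕ) :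
    D * qPochhammer R N ^ e ≡ σ (qPochhammer R N) ^ k
      [SMOD Ideal.span {(X : R⟦X⟧) ^ (N + 1)}] := by
  refine smodEq_X_pow_iff.2 fun i hi => ?_
  have hle : Ideal.span {(X : R⟦X⟧) ^ (2 * (i + 1))} ≤ Ideal.span {X ^ (i + 1)} :=
    Ideal.span_singleton_le_span_singleton.2 (pow_dvd_pow X (by omega))
  have hl := (SModEq.refl D).mul ((qPochhammer_smodEq (R := R) (show i ≤ N by omega)).pow e)
  have hr := ((expand_smodEq two_ne_zero (qPochhammer_smodEq (R := R) (show i ≤ N by omega))).mono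
    hle).pow k
  rw [smodEq_X_pow_iff.1 hl i (lt_add_one i), h i, smodEq_X_pow_iff.1 hr i (lt_add_one i)]

theorem coeff_eq_zero_of_mul_qPochhammer_pow_smodEq (h16 : (16 : R) = 0) {D : R⟦X⟧} {n j : ℕ}
    (hD : D * qPochhammer R (4 * n + 3) ^ (3 * (16 * j + 15) + 1) ≡
      σ (qPochhammer R (4 * n + 3)) ^ (16 * j + 15)
        [SMOD Ideal.span {(X : R⟦X⟧) ^ (4 * n + 3 + 1)}]) :
    coeff (4 * n + 3) D = 0 := by
  set N := 4 * n + 3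
  obtain ⟨E', hE⟩ := (isUnit_qPochhammer (R := R) N).exists_right_inv
  have h16' : (16 : R⟦X⟧) = 0 := by rw [← map_ofNat C 16, h16, map_zero]
  obtain ⟨y, hy⟩ := exists_pow_mul_inv_pow_eq_sub_map h16' σ hE
    (two_dvd_qPochhammer_sq_sub_expand N) j
  have hD' : D ≡ σ (qPochhammer R N) ^ (16 * j + 15) * E' ^ (3 * (16 * j + 15) + 1)
      [SMOD Ideal.span {(X : R⟦X⟧) ^ (N + 1)}] := by
    simpa [← mul_pow, hE, mul_assoc] using hD.mul (SModEq.refl (E' ^ (3 * (16 * j + 15) + 1)))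
  have hσσ : σ (σ E') = expand (2 * 2) (by norm_num) E' := (expand_mul 2 _ 2 _ E').symm
  have hσE' : σ (qPochhammer R N) * σ E' = 1 := by rw [← map_mul, hE, map_one]
  rw [smodEq_X_pow_iff.1 hD' N (lt_add_one N), hy, map_sub, hσσ, ← map_pow, coeff_mul_expand_eq_zero, coeff_expand_of_not_dvd, sub_zero]
  · omega
  · intro i hi hi4
    exact coeff_qPochhammer_sq_mul_eq_zero hσE' hi (not_isSquare_of_mod_four_eq_three (by omega))

end Congruence

theorem stmt_12 (d : ℕ → ℕ → ℤ) (hd : ElongatedDiamondGF d) :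
    ∀ n j : ℕ, (16 : ℤ) ∣ d (16 * j + 15) (4 * n + 3) := by
  intro n j
  have hcoeff (i : ℕ) :
      coeff i (map (Int.castRingHom (ZMod 16)) (mk (d (16 * j + 15))) *
        qPochhammer (ZMod 16) i ^ (3 * (16 * j + 15) + 1)) =
      coeff i (expand 2 two_ne_zero (qPochhammer (ZMod 16) i) ^ (16 * j + 15)) := by
    have := congrArg (Int.castRingHom (ZMod 16)) (hd (16 * j + 15) (by omega) i)
    rw [prod_pow, prod_pow, ← expand_qPochhammer, ← qPochhammer, ← coeff_map, ← coeff_map] at this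
    simpa using this
  have hzero := coeff_eq_zero_of_mul_qPochhammer_pow_smodEq (by decide)
    (mul_qPochhammer_pow_smodEq hcoeff (4 * n + 3))
  rw [coeff_map, coeff_mk] at hzero
  exact (ZMod.intCast_zmod_eq_zero_iff_dvd _ 16).1 hzero
end
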